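/- arXiv:2308.09210 — 4 statements merged into one kernel-verified Lean document; each statement's English description precedes it below -/
import Mathlib

section
/- Expectation of the similarity score (Proposition 1). Condition on the underlying permutation Π* being the identity. For every pair of users (i,j)∈[n]×[n] and every integer k≥3 with k≤min(n−1,m), the similarity score satisfies E[Φ_{ij}] = C(m,k)·(ρ_u σ_u²)^k·(ρ_a σ_a²)^k·C(n−1,k)·k!·1{i=j}; in particular E[Φ_{ij}]=0 whenever i≠j. -/
open MeasureTheory ProbabilityTheory Filter Finset

/-- A pair of `{0,1}`-valued random variables whose joint law is the
correlated Bernoulli`(q, ρ)` law. -/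
def IsCorrBern {Ω : Type*} [MeasurableSpace Ω] (P : Measure Ω)
    (X Y : Ω → ℝ) (q ρ : ℝ) : Prop :=
  Measurable X ∧ Measurable Y ∧
  (∀ ω, X ω = 0 ∨ X ω = 1) ∧ (∀ ω, Y ω = 0 ∨ Y ω = 1) ∧
  P {ω | X ω = 1 ∧ Y ω = 1} = ENNReal.ofReal (q ^ 2 + ρ * q * (1 - q)) ∧
  P {ω | X ω = 1 ∧ Y ω = 0} = ENNReal.ofReal (q * (1 - q) * (1 - ρ)) ∧
  P {ω | X ω = 0 ∧ Y ω = 1} = ENNReal.ofReal (q * (1 - q) * (1 - ρ)) ∧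
  P {ω | X ω = 0 ∧ Y ω = 0} = ENNReal.ofReal ((1 - q) ^ 2 + ρ * q * (1 - q))

/-- The edge indicators of the pair of attributed graphs `(G₁, G₂')` on `n` user
vertices and `m` attribute vertices:  `Au`/`Aa` are the user–user/user–attribute
edge indicators of `G₁`, and `Bu`/`Ba` those of `G₂'`. -/
structure GraphPair (Ω : Type*) (n m : ℕ) where
  Au : Sym2 (Fin n) → Ω → ℝ
  Aa : Fin n × Fin m → Ω → ℝ
  Bu : Sym2 (Fin n) → Ω → ℝ
  Ba : Fin n × Fin m → Ω → ℝ

/-- The attributed Erdős–Rényi graph pair model `G(n,q_u,ρ_u;m,q_a,ρ_a)` with underlying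
permutation `π`: each user–user pair of indicators is a correlated Bernoulli`(q_u,ρ_u)`
pair, each user–attribute pair is a correlated Bernoulli`(q_a,ρ_a)` pair, and all these
pairs are mutually independent. -/
def GraphPair.IsAttrER {Ω : Type*} [MeasurableSpace Ω] {n m : ℕ}
    (G : GraphPair Ω n m) (P : Measure Ω) (π : Equiv.Perm (Fin n))
    (qu ρu qa ρa : ℝ) : Prop :=
  IsProbabilityMeasure P ∧
  (∀ e : Sym2 (Fin n), ¬ e.IsDiag → IsCorrBern P (G.Au e) (G.Bu (Sym2.map π e)) qu ρu) ∧
  (∀ p : Fin n × Fin m, IsCorrBern P (G.Aa p) (G.Ba (π p.1, p.2)) qa ρa) ∧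
  iIndepFun
    (Sum.elim
      (fun e : {e : Sym2 (Fin n) // ¬ e.IsDiag} =>
        fun ω => (G.Au e.1 ω, G.Bu (Sym2.map π e.1) ω))
      (fun p : Fin n × Fin m => fun ω => (G.Aa p ω, G.Ba (π p.1, p.2) ω))) P

/-- The set of attributes used by the tree encoded by `f` with root `i`:  a tree of the
family `G_{i,A}` is encoded by the function `f` sending each attribute `a ∈ A` to the
user (≠ `i`) on the length-2 path from `i` to `a`, with the convention `f a = i` off `A`. -/
def treeSupp {n m : ℕ} (i : Fin n) (f : Fin m → Fin n) : Finset (Fin m) :=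
  Finset.univ.filter (fun a => f a ≠ i)

/-- `f` encodes a tree of the family `G_{i,A}`. -/
def IsPort {n m : ℕ} (i : Fin n) (A : Finset (Fin m)) (f : Fin m → Fin n) : Prop :=
  treeSupp i f = A ∧ Set.InjOn f ↑(treeSupp i f)

/-- `f` encodes a tree of the family `G_{i,A}` for some set `A` of `k` attributes. -/
def IsATree {n m : ℕ} (i : Fin n) (k : ℕ) (f : Fin m → Fin n) : Prop :=
  (treeSupp i f).card = k ∧ Set.InjOn f ↑(treeSupp i f)

/-- The user–user edges of the tree with root `i` encoded by `f`. -/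
def userEdges {n m : ℕ} (i : Fin n) (f : Fin m → Fin n) : Finset (Sym2 (Fin n)) :=
  (treeSupp i f).image (fun a => s(i, f a))

/-- The user–attribute edges of the tree with root `i` encoded by `f`. -/
def attrEdges {n m : ℕ} (i : Fin n) (f : Fin m → Fin n) : Finset (Fin n × Fin m) :=
  (treeSupp i f).image (fun a => (f a, a))

/-- The port (non-root user) vertices of the tree with root `i` encoded by `f`. -/
def ports {n m : ℕ} (i : Fin n) (f : Fin m → Fin n) : Finset (Fin n) :=
  (treeSupp i f).image f

/-- The weight `ω(S)` of the tree `S` (root `i`, encoding `f`) in the graph with user–user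
edge indicators `Xu` and user–attribute edge indicators `Xa`. -/
noncomputable def wt {Ω : Type*} {n m : ℕ} (Xu : Sym2 (Fin n) → Ω → ℝ)
    (Xa : Fin n × Fin m → Ω → ℝ) (qu qa : ℝ) (i : Fin n) (f : Fin m → Fin n)
    (ω : Ω) : ℝ :=
  (∏ e ∈ userEdges i f, (Xu e ω - qu)) * (∏ p ∈ attrEdges i f, (Xa p ω - qa))

open scoped Classical in
/-- The weighted count `W_{i,A}` of the family `G_{i,A}`. -/
noncomputable def Wsum {Ω : Type*} {n m : ℕ} (Xu : Sym2 (Fin n) → Ω → ℝ)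
    (Xa : Fin n × Fin m → Ω → ℝ) (qu qa : ℝ) (i : Fin n) (A : Finset (Fin m))
    (ω : Ω) : ℝ :=
  ∑ f : Fin m → Fin n, if IsPort i A f then wt Xu Xa qu qa i f ω else 0

/-- The similarity score `Φ_{ij}`. -/
noncomputable def Phi {Ω : Type*} {n m : ℕ} (G : GraphPair Ω n m)
    (qu qa : ℝ) (k : ℕ) (i j : Fin n) (ω : Ω) : ℝ :=
  ∑ A ∈ Finset.powersetCard k (Finset.univ : Finset (Fin m)),
    Wsum G.Au G.Aa qu qa i A ω * Wsum G.Bu G.Ba qu qa j A ω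

/-!
Expanding the product of the two weighted counts writes `E[Φ_{ij}]` as a sum over pairs of trees
`(S, S')` of `E[ω₁(S) ω₂(S')]`. This expectation factorizes over the independent pairs of edge
indicators, and since every edge variable is centered it vanishes unless `S` and `S'` have the same
edges, in which case each of the `k` user–user and `k` user–attribute edges contributes its
covariance `ρ σ²`. Trees on a common nonempty attribute set with the same edges have the same root
and the same encoding, so only `i = j`, `S = S'` survives; the trees of `G_{i,A}` are the
injections `A → [n] ∖ {i}`, of which there are `(n-1)! / (n-1-k)! = C(n-1,k) k!`.
-/

section ZeroOne
variable {Ω : Type*} [MeasurableSpace Ω] {P : Measure Ω} {X Y : Ω → ℝ}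

lemma integral_comp_of_zero_or_one [IsFiniteMeasure P] (hX : Measurable X) (hY : Measurable Y)
    (hX01 : ∀ ω, X ω = 0 ∨ X ω = 1) (hY01 : ∀ ω, Y ω = 0 ∨ Y ω = 1) (φ : ℝ → ℝ → ℝ) :
    ∫ ω, φ (X ω) (Y ω) ∂P =
      P.real {ω | X ω = 1 ∧ Y ω = 1} * φ 1 1 + P.real {ω | X ω = 1 ∧ Y ω = 0} * φ 1 0 +
        P.real {ω | X ω = 0 ∧ Y ω = 1} * φ 0 1 + P.real {ω | X ω = 0 ∧ Y ω = 0} * φ 0 0 := by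
  have hS : ∀ x y : ℝ, MeasurableSet {ω | X ω = x ∧ Y ω = y} := fun x y =>
    (hX (measurableSet_singleton x)).inter (hY (measurableSet_singleton y))
  have hI : ∀ (x y c : ℝ), Integrable ({ω | X ω = x ∧ Y ω = y}.indicator fun _ => c) P :=
    fun x y c => (integrable_const c).indicator (hS x y)
  have hsplit : (fun ω => φ (X ω) (Y ω)) = fun ω =>
      {ω | X ω = 1 ∧ Y ω = 1}.indicator (fun _ => φ 1 1) ω +
        {ω | X ω = 1 ∧ Y ω = 0}.indicator (fun _ => φ 1 0) ω +
        {ω | X ω = 0 ∧ Y ω = 1}.indicator (fun _ => φ 0 1) ω +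
        {ω | X ω = 0 ∧ Y ω = 0}.indicator (fun _ => φ 0 0) ω := by
    funext ω
    rcases hX01 ω with hx | hx <;> rcases hY01 ω with hy | hy <;>
      simp [hx, hy]
  rw [hsplit, integral_add ?_ (hI ..), integral_add ?_ (hI ..), integral_add (hI ..) (hI ..)]
  · simp only [integral_indicator_const _ (hS ..), smul_eq_mul]
  · exact (hI ..).add (hI ..)
  · exact ((hI ..).add (hI ..)).add (hI ..)

lemma memLp_top_sub_of_zero_or_one (hX : Measurable X)
    (hX01 : ∀ ω, X ω = 0 ∨ X ω = 1) (c : ℝ) : MemLp (fun ω => X ω - c) ⊤ P := by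
  refine memLp_top_of_bound (hX.sub measurable_const).aestronglyMeasurable (1 + |c|)
    (Eventually.of_forall fun ω => ?_)
  rcases hX01 ω with h | h <;> simp only [h, Real.norm_eq_abs]
  · rw [zero_sub, abs_neg]; linarith
  · linarith [abs_sub (1 : ℝ) c, abs_one (α := ℝ)]

end ZeroOne

namespace IsCorrBern
variable {Ω : Type*} [MeasurableSpace Ω] {P : Measure Ω} [IsProbabilityMeasure P]
  {X Y : Ω → ℝ} {q ρ : ℝ}

lemma integral_comp (h : IsCorrBern P X Y q ρ) (φ : ℝ → ℝ → ℝ) :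
    ∫ ω, φ (X ω) (Y ω) ∂P =
      (q ^ 2 + ρ * q * (1 - q)) * φ 1 1 + (q * (1 - q) * (1 - ρ)) * φ 1 0 +
        (q * (1 - q) * (1 - ρ)) * φ 0 1 + ((1 - q) ^ 2 + ρ * q * (1 - q)) * φ 0 0 := by
  obtain ⟨hX, hY, hX01, hY01, h11, h10, h01, h00⟩ := h
  have hsum := integral_comp_of_zero_or_one (P := P) hX hY hX01 hY01
  simp only [measureReal_def, h11, h10, h01, h00, ENNReal.toReal_ofReal'] at hsum ⊢
  -- `ENNReal.ofReal` truncates at `0`; the four truncated masses have total mass `1`, which is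
  -- also the sum of the untruncated ones, so no truncation occurred.
  have htotal := hsum fun _ _ => 1
  simp only [integral_const, probReal_univ, smul_eq_mul, mul_one] at htotal
  set a := q ^ 2 + ρ * q * (1 - q) with ha
  set b := q * (1 - q) * (1 - ρ) with hb
  set d := (1 - q) ^ 2 + ρ * q * (1 - q) with hd
  have habd : a + b + b + d = 1 := by rw [ha, hb, hd]; ring
  have := le_max_left a 0; have := le_max_left b 0; have := le_max_left d 0
  have := le_max_right a 0; have := le_max_right b 0; have := le_max_right d 0
  rw [hsum φ, max_eq_left (by linarith), max_eq_left (by linarith), max_eq_left (by linarith)]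

lemma integral_fst_sub (h : IsCorrBern P X Y q ρ) : ∫ ω, (X ω - q) ∂P = 0 := by
  rw [h.integral_comp fun x _ => x - q]; ring

lemma integral_snd_sub (h : IsCorrBern P X Y q ρ) : ∫ ω, (Y ω - q) ∂P = 0 := by
  rw [h.integral_comp fun _ y => y - q]; ring

lemma integral_mul_sub (h : IsCorrBern P X Y q ρ) :
    ∫ ω, (X ω - q) * (Y ω - q) ∂P = ρ * (q * (1 - q)) := by
  rw [h.integral_comp fun x y => (x - q) * (y - q)]; ring

end IsCorrBern

section CenteredPairs
variable {ι Ω : Type*} [MeasurableSpace Ω] {P : Measure Ω} {Z : ι → Ω → ℝ × ℝ}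

lemma memLp_top_prod {s : Finset ι} {F : ι → Ω → ℝ} (hF : ∀ t, MemLp (F t) ⊤ P) :
    MemLp (fun ω => ∏ t ∈ s, F t ω) ⊤ P := by
  simpa using MemLp.prod' (p := fun _ => ⊤) (s := s) fun t _ => hF t

lemma integrable_prod_fst_mul_prod_snd [IsFiniteMeasure P]
    (h1 : ∀ t, MemLp (fun ω => (Z t ω).1) ⊤ P) (h2 : ∀ t, MemLp (fun ω => (Z t ω).2) ⊤ P)
    (s s' : Finset ι) :
    Integrable (fun ω => (∏ t ∈ s, (Z t ω).1) * ∏ t ∈ s', (Z t ω).2) P :=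
  ((memLp_top_prod h2).mul' (memLp_top_prod h1)).integrable le_top

variable [Fintype ι] [DecidableEq ι]

lemma integral_prod_fst_mul_prod_snd_of_iIndepFun (hZ : iIndepFun Z P)
    (hZm : ∀ t, Measurable (Z t)) (h1 : ∀ t, ∫ ω, (Z t ω).1 ∂P = 0)
    (h2 : ∀ t, ∫ ω, (Z t ω).2 ∂P = 0) (s s' : Finset ι) :
    ∫ ω, (∏ t ∈ s, (Z t ω).1) * ∏ t ∈ s', (Z t ω).2 ∂P =
      if s = s' then ∏ t ∈ s, ∫ ω, (Z t ω).1 * (Z t ω).2 ∂P else 0 := by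
  have := hZ.isProbabilityMeasure
  set φ : ι → ℝ × ℝ → ℝ := fun t z => (if t ∈ s then z.1 else 1) * (if t ∈ s' then z.2 else 1)
  have hφ : ∀ t, Measurable (φ t) := fun t => by simp only [φ]; split_ifs <;> fun_prop
  have hprod : ∀ ω, (∏ t ∈ s, (Z t ω).1) * ∏ t ∈ s', (Z t ω).2 = ∏ t, φ t (Z t ω) := fun ω => by
    simp only [φ, prod_mul_distrib, Fintype.prod_ite_mem]
  have hfactor : ∀ t, ∫ ω, φ t (Z t ω) ∂P =
      if t ∈ s ∧ t ∈ s' then ∫ ω, (Z t ω).1 * (Z t ω).2 ∂P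
      else if t ∈ s ∨ t ∈ s' then 0 else 1 := fun t => by
    by_cases hs : t ∈ s <;> by_cases hs' : t ∈ s' <;> simp [φ, hs, hs', h1, h2]
  simp_rw [hprod]
  rw [hZ.integral_fun_prod_comp (fun t => (hZm t).aemeasurable)
    (fun t => (hφ t).aestronglyMeasurable)]
  split_ifs with hss
  · subst hss
    rw [← Fintype.prod_ite_mem s]
    exact Fintype.prod_congr _ _ fun t => by rw [hfactor]; by_cases ht : t ∈ s <;> simp [ht]
  · obtain ⟨t, ht⟩ : ∃ t, ¬ (t ∈ s ↔ t ∈ s') := by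
      by_contra! h
      exact hss (ext h)
    exact prod_eq_zero (mem_univ t) (by rw [hfactor]; by_cases hs : t ∈ s <;> simp_all)

end CenteredPairs

section Trees
variable {n m : ℕ} {i j : Fin n} {f g : Fin m → Fin n} {A : Finset (Fin m)}

lemma mem_treeSupp {a : Fin m} : a ∈ treeSupp i f ↔ f a ≠ i := by
  simp [treeSupp]

lemma IsPort.apply_ne (hf : IsPort i A f) {a : Fin m} (ha : a ∈ A) : f a ≠ i :=
  mem_treeSupp.mp (hf.1 ▸ ha)

lemma IsPort.apply_eq (hf : IsPort i A f) {a : Fin m} (ha : a ∉ A) : f a = i := by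
  by_contra h
  exact ha (hf.1 ▸ mem_treeSupp.mpr h)

lemma userEdges_not_isDiag {e : Sym2 (Fin n)} (he : e ∈ userEdges i f) : ¬ e.IsDiag := by
  obtain ⟨a, ha, rfl⟩ := mem_image.mp he
  simpa [eq_comm] using mem_treeSupp.mp ha

lemma card_userEdges (h : Set.InjOn f (treeSupp i f)) :
    #(userEdges i f) = #(treeSupp i f) := by
  refine card_image_of_injOn fun a ha b hb hab => ?_
  rcases Sym2.eq_iff.mp hab with ⟨-, h2⟩ | ⟨-, h2⟩
  · exact h ha hb h2
  · exact absurd h2 (mem_treeSupp.mp ha)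

lemma card_attrEdges : #(attrEdges i f) = #(treeSupp i f) :=
  card_image_of_injective _ fun _ _ hab => (Prod.mk.inj hab).2

/-- Indices of the independent pairs of edge indicators in `GraphPair.IsAttrER`. -/
abbrev EdgeIndex (n m : ℕ) : Type := {e : Sym2 (Fin n) // ¬ e.IsDiag} ⊕ Fin n × Fin m

def treeEdges (i : Fin n) (f : Fin m → Fin n) : Finset (EdgeIndex n m) :=
  ((userEdges i f).subtype fun e => ¬ e.IsDiag).disjSum (attrEdges i f)

noncomputable def centeredEdges {Ω : Type*} (Xu : Sym2 (Fin n) → Ω → ℝ)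
    (Xa : Fin n × Fin m → Ω → ℝ) (qu qa : ℝ) :
    EdgeIndex n m → Ω → ℝ :=
  Sum.elim (fun e ω => Xu e ω - qu) (fun p ω => Xa p ω - qa)

lemma wt_eq_prod_treeEdges {Ω : Type*} (Xu : Sym2 (Fin n) → Ω → ℝ)
    (Xa : Fin n × Fin m → Ω → ℝ) (qu qa : ℝ) (i : Fin n) (f : Fin m → Fin n) (ω : Ω) :
    wt Xu Xa qu qa i f ω = ∏ t ∈ treeEdges i f, centeredEdges Xu Xa qu qa t ω := by
  rw [wt, treeEdges, prod_disjSum]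
  simp only [centeredEdges, Sum.elim_inl, Sum.elim_inr]
  rw [prod_subtype_eq_prod_filter (fun e => Xu e ω - qu),
    filter_true_of_mem fun e he => userEdges_not_isDiag he]

lemma prod_treeEdges_sumElim_const (h : Set.InjOn f (treeSupp i f)) (a b : ℝ) :
    ∏ t ∈ treeEdges i f, Sum.elim (fun _ => a) (fun _ => b) t =
      a ^ #(treeSupp i f) * b ^ #(treeSupp i f) := by
  rw [treeEdges, prod_disjSum]
  simp only [Sum.elim_inl, Sum.elim_inr, prod_const, card_subtype, card_attrEdges,
    filter_true_of_mem fun e he => userEdges_not_isDiag he, card_userEdges h]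

/-- The attribute edge `(f a, a)` pins down `g a = f a`; the user edge `{i, f a}` is then some
`{j, g b}`, which forces `i = j` because `f a = g a ≠ j`. -/
lemma eq_of_treeEdges_eq (hf : IsPort i A f) (hg : IsPort j A g) (hA : A.Nonempty)
    (hE : treeEdges i f = treeEdges j g) : i = j ∧ f = g := by
  have hfg : ∀ a ∈ A, f a = g a := fun a ha => by
    have hmem : Sum.inr (f a, a) ∈ treeEdges j g := by
      rw [← hE, treeEdges, inr_mem_disjSum]
      exact mem_image_of_mem _ (hf.1 ▸ ha)
    rw [treeEdges, inr_mem_disjSum] at hmem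
    obtain ⟨b, -, hb⟩ := mem_image.mp hmem
    obtain ⟨hgb, rfl⟩ := Prod.mk.inj hb
    exact hgb.symm
  obtain ⟨a, ha⟩ := hA
  have hij : i = j := by
    have hdiag : ¬ (s(i, f a)).IsDiag := by simpa [eq_comm] using hf.apply_ne ha
    have hmem : Sum.inl ⟨s(i, f a), hdiag⟩ ∈ treeEdges j g := by
      rw [← hE, treeEdges, inl_mem_disjSum, mem_subtype]
      exact mem_image_of_mem _ (hf.1 ▸ ha)
    rw [treeEdges, inl_mem_disjSum, mem_subtype] at hmem
    obtain ⟨b, -, hb⟩ := mem_image.mp hmem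
    rcases Sym2.eq_iff.mp hb with ⟨hji, -⟩ | ⟨hj, -⟩
    · exact hji.symm
    · exact absurd (hj ▸ hfg a ha).symm (hg.apply_ne ha)
  refine ⟨hij, funext fun a => ?_⟩
  by_cases ha : a ∈ A
  · exact hfg a ha
  · rw [hf.apply_eq ha, hg.apply_eq ha, hij]

end Trees

section Counting
variable {n m : ℕ} {i : Fin n} {A : Finset (Fin m)}

lemma isPort_extend (e : A ↪ {x : Fin n // x ≠ i}) :
    IsPort i A fun a => if h : a ∈ A then (e ⟨a, h⟩ : Fin n) else i := by
  have hsupp : treeSupp i (fun a => if h : a ∈ A then (e ⟨a, h⟩ : Fin n) else i) = A := by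
    ext a
    by_cases h : a ∈ A
    · simp [mem_treeSupp, h, (e ⟨a, h⟩).2]
    · simp [mem_treeSupp, h]
  refine ⟨hsupp, ?_⟩
  rw [hsupp]
  intro a ha b hb hab
  simp only [dif_pos (mem_coe.mp ha), dif_pos (mem_coe.mp hb)] at hab
  exact congrArg Subtype.val (e.injective (Subtype.ext hab))

def isPortEquivEmbedding (i : Fin n) (A : Finset (Fin m)) :
    {f : Fin m → Fin n // IsPort i A f} ≃ (A ↪ {x : Fin n // x ≠ i}) where
  toFun f := ⟨fun a => ⟨f.1 a, f.2.apply_ne a.2⟩, fun a b hab =>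
    Subtype.ext (f.2.2 (f.2.1.symm ▸ a.2) (f.2.1.symm ▸ b.2) (congrArg Subtype.val hab))⟩
  invFun e := ⟨_, isPort_extend e⟩
  left_inv f := Subtype.ext <| funext fun a => by
    by_cases h : a ∈ A
    · simp only [dif_pos h]; rfl
    · simp [h, f.2.apply_eq h]
  right_inv e := by ext a; simp

open scoped Classical in
lemma card_filter_isPort (i : Fin n) (A : Finset (Fin m)) :
    #(univ.filter (IsPort i A)) = (n - 1).descFactorial #A := by
  rw [← Fintype.card_subtype, Fintype.card_congr (isPortEquivEmbedding i A),
    Fintype.card_embedding_eq, Fintype.card_coe, Fintype.card_subtype_compl,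
    Fintype.card_subtype_eq, Fintype.card_fin]

open scoped Classical in
lemma sum_filter_isPort_ite (i j : Fin n) (A : Finset (Fin m)) (D : ℝ) :
    ∑ f ∈ univ.filter (IsPort i A), ∑ g ∈ univ.filter (IsPort j A),
        (if i = j ∧ f = g then D else 0) =
      if i = j then ((n - 1).descFactorial #A : ℝ) * D else 0 := by
  split_ifs with hij
  · subst hij
    simp only [true_and, sum_ite_eq]
    rw [sum_ite_mem, inter_self, sum_const, card_filter_isPort, nsmul_eq_mul]
  · simp [hij]

end Counting

open scoped Classical in
lemma Phi_eq_sum {Ω : Type*} {n m : ℕ} (G : GraphPair Ω n m) (qu qa : ℝ) (k : ℕ) (i j : Fin n)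
    (ω : Ω) :
    Phi G qu qa k i j ω =
      ∑ A ∈ powersetCard k univ, ∑ f ∈ univ.filter (IsPort i A), ∑ g ∈ univ.filter (IsPort j A),
        wt G.Au G.Aa qu qa i f ω * wt G.Bu G.Ba qu qa j g ω := by
  simp only [Phi, Wsum, ← sum_filter, sum_mul_sum]

namespace GraphPair
variable {Ω : Type*} [MeasurableSpace Ω] {n m : ℕ}

noncomputable def centeredPair (G : GraphPair Ω n m) (qu qa : ℝ)
    (t : EdgeIndex n m) (ω : Ω) : ℝ × ℝ :=
  (centeredEdges G.Au G.Aa qu qa t ω, centeredEdges G.Bu G.Ba qu qa t ω)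

namespace IsAttrER
variable {G : GraphPair Ω n m} {P : Measure Ω} {qu ρu qa ρa : ℝ}

lemma isCorrBern_user (hG : G.IsAttrER P (Equiv.refl (Fin n)) qu ρu qa ρa)
    (e : {e : Sym2 (Fin n) // ¬ e.IsDiag}) : IsCorrBern P (G.Au e) (G.Bu e) qu ρu := by
  simpa using hG.2.1 e.1 e.2

lemma isCorrBern_attr (hG : G.IsAttrER P (Equiv.refl (Fin n)) qu ρu qa ρa)
    (p : Fin n × Fin m) : IsCorrBern P (G.Aa p) (G.Ba p) qa ρa := by
  simpa using hG.2.2.1 p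

lemma iIndepFun_centeredPair (hG : G.IsAttrER P (Equiv.refl (Fin n)) qu ρu qa ρa) :
    iIndepFun (G.centeredPair qu qa) P := by
  have hind := hG.2.2.2
  simp only [Equiv.coe_refl, Sym2.map_id', id_eq, Equiv.refl_apply] at hind
  let c : EdgeIndex n m → ℝ := Sum.elim (fun _ => qu) fun _ => qa
  convert hind.comp (fun t z => (z.1 - c t, z.2 - c t)) fun t => by fun_prop using 1
  funext t
  rcases t with e | p <;> rfl

lemma measurable_centeredPair (hG : G.IsAttrER P (Equiv.refl (Fin n)) qu ρu qa ρa)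
    (t : EdgeIndex n m) :
    Measurable (G.centeredPair qu qa t) := by
  rcases t with e | p
  · obtain ⟨hX, hY, -⟩ := hG.isCorrBern_user e
    exact (hX.sub_const qu).prodMk (hY.sub_const qu)
  · obtain ⟨hX, hY, -⟩ := hG.isCorrBern_attr p
    exact (hX.sub_const qa).prodMk (hY.sub_const qa)

lemma integral_centeredPair_fst (hG : G.IsAttrER P (Equiv.refl (Fin n)) qu ρu qa ρa)
    (t : EdgeIndex n m) :
    ∫ ω, (G.centeredPair qu qa t ω).1 ∂P = 0 := by
  have := hG.1
  rcases t with e | p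
  · exact (hG.isCorrBern_user e).integral_fst_sub
  · exact (hG.isCorrBern_attr p).integral_fst_sub

lemma integral_centeredPair_snd (hG : G.IsAttrER P (Equiv.refl (Fin n)) qu ρu qa ρa)
    (t : EdgeIndex n m) :
    ∫ ω, (G.centeredPair qu qa t ω).2 ∂P = 0 := by
  have := hG.1
  rcases t with e | p
  · exact (hG.isCorrBern_user e).integral_snd_sub
  · exact (hG.isCorrBern_attr p).integral_snd_sub

lemma integral_centeredPair_fst_mul_snd (hG : G.IsAttrER P (Equiv.refl (Fin n)) qu ρu qa ρa)
    (t : EdgeIndex n m) :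
    ∫ ω, (G.centeredPair qu qa t ω).1 * (G.centeredPair qu qa t ω).2 ∂P =
      Sum.elim (fun _ => ρu * (qu * (1 - qu))) (fun _ => ρa * (qa * (1 - qa))) t := by
  have := hG.1
  rcases t with e | p
  · exact (hG.isCorrBern_user e).integral_mul_sub
  · exact (hG.isCorrBern_attr p).integral_mul_sub

lemma memLp_centeredPair_fst (hG : G.IsAttrER P (Equiv.refl (Fin n)) qu ρu qa ρa)
    (t : EdgeIndex n m) :
    MemLp (fun ω => (G.centeredPair qu qa t ω).1) ⊤ P := by
  rcases t with e | p
  · obtain ⟨hX, -, hX01, -⟩ := hG.isCorrBern_user e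
    exact memLp_top_sub_of_zero_or_one hX hX01 qu
  · obtain ⟨hX, -, hX01, -⟩ := hG.isCorrBern_attr p
    exact memLp_top_sub_of_zero_or_one hX hX01 qa

lemma memLp_centeredPair_snd (hG : G.IsAttrER P (Equiv.refl (Fin n)) qu ρu qa ρa)
    (t : EdgeIndex n m) :
    MemLp (fun ω => (G.centeredPair qu qa t ω).2) ⊤ P := by
  rcases t with e | p
  · obtain ⟨-, hY, -, hY01, -⟩ := hG.isCorrBern_user e
    exact memLp_top_sub_of_zero_or_one hY hY01 qu
  · obtain ⟨-, hY, -, hY01, -⟩ := hG.isCorrBern_attr p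
    exact memLp_top_sub_of_zero_or_one hY hY01 qa

lemma integrable_wt_mul_wt (hG : G.IsAttrER P (Equiv.refl (Fin n)) qu ρu qa ρa)
    (i j : Fin n) (f g : Fin m → Fin n) :
    Integrable (fun ω => wt G.Au G.Aa qu qa i f ω * wt G.Bu G.Ba qu qa j g ω) P := by
  have := hG.1
  simp only [wt_eq_prod_treeEdges]
  exact integrable_prod_fst_mul_prod_snd (Z := G.centeredPair qu qa)
    hG.memLp_centeredPair_fst hG.memLp_centeredPair_snd _ _

lemma integral_wt_mul_wt (hG : G.IsAttrER P (Equiv.refl (Fin n)) qu ρu qa ρa)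
    (i j : Fin n) (f g : Fin m → Fin n) :
    ∫ ω, wt G.Au G.Aa qu qa i f ω * wt G.Bu G.Ba qu qa j g ω ∂P =
      if treeEdges i f = treeEdges j g then
        ∏ t ∈ treeEdges i f,
          Sum.elim (fun _ => ρu * (qu * (1 - qu))) (fun _ => ρa * (qa * (1 - qa))) t
      else 0 := by
  simp only [wt_eq_prod_treeEdges, ← hG.integral_centeredPair_fst_mul_snd]
  exact integral_prod_fst_mul_prod_snd_of_iIndepFun (Z := G.centeredPair qu qa)
    hG.iIndepFun_centeredPair hG.measurable_centeredPair hG.integral_centeredPair_fst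
    hG.integral_centeredPair_snd _ _

open scoped Classical in
lemma integral_Phi (hG : G.IsAttrER P (Equiv.refl (Fin n)) qu ρu qa ρa) (k : ℕ) (i j : Fin n) :
    ∫ ω, Phi G qu qa k i j ω ∂P =
      ∑ A ∈ powersetCard k univ, ∑ f ∈ univ.filter (IsPort i A), ∑ g ∈ univ.filter (IsPort j A),
        ∫ ω, wt G.Au G.Aa qu qa i f ω * wt G.Bu G.Ba qu qa j g ω ∂P := by
  have hint := hG.integrable_wt_mul_wt i j
  simp_rw [Phi_eq_sum]
  rw [integral_finsetSum _ fun A _ => integrable_finsetSum _ fun f _ =>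
    integrable_finsetSum _ fun g _ => hint f g]
  refine sum_congr rfl fun A _ => ?_
  rw [integral_finsetSum _ fun f _ => integrable_finsetSum _ fun g _ => hint f g]
  exact sum_congr rfl fun f _ => integral_finsetSum _ fun g _ => hint f g

lemma integral_wt_mul_wt_of_isPort (hG : G.IsAttrER P (Equiv.refl (Fin n)) qu ρu qa ρa)
    {i j : Fin n} {A : Finset (Fin m)} {f g : Fin m → Fin n} (hf : IsPort i A f)
    (hg : IsPort j A g) (hA : A.Nonempty) :
    ∫ ω, wt G.Au G.Aa qu qa i f ω * wt G.Bu G.Ba qu qa j g ω ∂P =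
      if i = j ∧ f = g then (ρu * (qu * (1 - qu))) ^ #A * (ρa * (qa * (1 - qa))) ^ #A
      else 0 := by
  rw [hG.integral_wt_mul_wt]
  by_cases h : i = j ∧ f = g
  · obtain ⟨rfl, rfl⟩ := h
    rw [if_pos rfl, if_pos ⟨rfl, rfl⟩, prod_treeEdges_sumElim_const hf.2, hf.1]
  · rw [if_neg h, if_neg fun hE => h (eq_of_treeEdges_eq hf hg hA hE)]

end IsAttrER
end GraphPair

theorem expectation_similarity_score_general {Ω : Type*} [MeasurableSpace Ω] {n m : ℕ}
    (G : GraphPair Ω n m) (P : Measure Ω) (qu ρu qa ρa : ℝ)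
    (hmodel : G.IsAttrER P (Equiv.refl (Fin n)) qu ρu qa ρa)
    (k : ℕ) (hk : 3 ≤ k) (i j : Fin n) :
    (∫ ω, Phi G qu qa k i j ω ∂P) =
      (Nat.choose m k : ℝ) * (ρu * (qu * (1 - qu))) ^ k * (ρa * (qa * (1 - qa))) ^ k *
        (Nat.choose (n - 1) k : ℝ) * (Nat.factorial k : ℝ) *
        (if i = j then 1 else 0) := by
  classical
  set D := (ρu * (qu * (1 - qu))) ^ k * (ρa * (qa * (1 - qa))) ^ k
  have hterm : ∀ A ∈ powersetCard k (univ : Finset (Fin m)),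
      ∀ f ∈ univ.filter (IsPort i A), ∀ g ∈ univ.filter (IsPort j A),
        ∫ ω, wt G.Au G.Aa qu qa i f ω * wt G.Bu G.Ba qu qa j g ω ∂P =
          if i = j ∧ f = g then D else 0 := fun A hA f hf g hg => by
    have hAk := (mem_powersetCard.mp hA).2
    rw [hmodel.integral_wt_mul_wt_of_isPort (mem_filter.mp hf).2 (mem_filter.mp hg).2
      (card_pos.mp (by omega)), hAk]
  have hinner : ∀ A ∈ powersetCard k (univ : Finset (Fin m)),
      ∑ f ∈ univ.filter (IsPort i A), ∑ g ∈ univ.filter (IsPort j A),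
        (if i = j ∧ f = g then D else 0) =
          if i = j then ((n - 1).descFactorial k : ℝ) * D else 0 := fun A hA => by
    rw [sum_filter_isPort_ite, (mem_powersetCard.mp hA).2]
  rw [hmodel.integral_Phi, sum_congr rfl fun A hA => (sum_congr rfl fun f hf =>
    sum_congr rfl fun g hg => hterm A hA f hf g hg).trans (hinner A hA), sum_const,
    card_powersetCard, card_univ, Fintype.card_fin, Nat.descFactorial_eq_factorial_mul_choose]
  split_ifs <;> push_cast <;> ring

/-- **Expectation of the similarity score (Proposition 1).** Conditionally on the
underlying permutation `Π*` being the identity, for every pair of users `(i,j)` and every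
`3 ≤ k ≤ min(n-1, m)`,
`E[Φ_{ij}] = C(m,k)·(ρ_u σ_u²)^k·(ρ_a σ_a²)^k·C(n-1,k)·k!·1{i=j}`. -/
theorem expectation_similarity_score {Ω : Type*} [MeasurableSpace Ω] {n m : ℕ}
    (G : GraphPair Ω n m) (P : Measure Ω) (qu ρu qa ρa : ℝ)
    (hmodel : G.IsAttrER P (Equiv.refl (Fin n)) qu ρu qa ρa)
    (k : ℕ) (hk : 3 ≤ k) (hkn : k ≤ n - 1) (hkm : k ≤ m) (i j : Fin n) :
    (∫ ω, Phi G qu qa k i j ω ∂P) =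
      (Nat.choose m k : ℝ) * (ρu * (qu * (1 - qu))) ^ k * (ρa * (qa * (1 - qa))) ^ k *
        (Nat.choose (n - 1) k : ℝ) * (Nat.factorial k : ℝ) *
        (if i = j then 1 else 0) :=
  expectation_similarity_score_general G P qu ρu qa ρa hmodel k hk i j
end

section
/- Correctness of the greedy refinement in the attribute-sparse regime (Proposition 4). Fix a constant ε>0 and consider parameter sequences satisfying, as n→∞: n·ρ_u²=ω(log n); n·q_u·(q_u+ρ_u(1−q_u))≥(1+ε)·log n; and ρ_u(1−q_u)/q_u≥ε. Let (G_1,G_2')∼G(n,q_u,ρ_u;m,q_a,ρ_a) with underlying permutation π*, and let π̂ be any (possibly graph-dependent) map from a set I⊆[n] to [n] such that π̂=π*|_I and |I|≥(1−ε/16)n. Let γ_1 be the unique solution in (1,∞) of f(γ_1)=3·log n/((n−2)·q_u²). Then with high probability, every run of the following procedure terminates with π̃=π*: initialize J:=I and π̃:=π̂; while there exist i∉J and j∉π̃(J) with N^u_{π̃}(i,j)≥γ_1·(n−2)·q_u², pick such a pair, set π̃(i):=j and J:=J∪{i}; output π̃. -/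
open MeasureTheory ProbabilityTheory Filter Finset

open scoped Classical in
/-- `N^u_π(i,j)` for the partial map `g` with domain `J`: the number of users `u ∈ J`
with `(i,u)` an edge of `G₁` and `(j, g(u))` an edge of `G₂'`. -/
noncomputable def NuJ {Ω : Type*} {n m : ℕ} (G : GraphPair Ω n m) (ω : Ω)
    (J : Finset (Fin n)) (g : Fin n → Fin n) (i j : Fin n) : ℕ :=
  (J.filter (fun u => u ≠ i ∧ G.Au s(i, u) ω = 1 ∧ g u ≠ j ∧ G.Bu s(j, g u) ω = 1)).card

/-- One step of the greedy refinement procedure (Algorithm 2): a state is a pair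
`(J, π̃)`; a step picks `i ∉ J` and `j ∉ π̃(J)` with `N^u_{π̃}(i,j)` at least the
threshold, and sets `π̃(i) := j`, `J := J ∪ {i}`. -/
def StepSparse {Ω : Type*} {n m : ℕ} (G : GraphPair Ω n m) (ω : Ω) (thr : ℝ)
    (st st' : Finset (Fin n) × (Fin n → Fin n)) : Prop :=
  ∃ i j : Fin n, i ∉ st.1 ∧ (∀ u ∈ st.1, st.2 u ≠ j) ∧
    thr ≤ (NuJ G ω st.1 st.2 i j : ℝ) ∧
    st'.1 = insert i st.1 ∧ st'.2 = Function.update st.2 i j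

/-!
Write `thr = γ₁(n-2)q_u²` and `a = q_u² + ρ_u q_u(1-q_u)`. While `π̃` agrees with `π*` on `J`,
`N^u_{π̃}(i,j)` is at most the count `N^u_{π*}(i,j)` over all users, which for `j ≠ π*(i)` is a sum
of `n - 2` independent Bernoulli`(q_u²)` indicators. By the Chernoff bound it reaches `thr` with
probability at most `exp(-(n-2)q_u² f(γ₁)) = n⁻³`, so with probability `1 - 1/n` no step of any
run matches a user wrongly and `π̃` stays a restriction of `π*`.

If a run stops with `J ≠ [n]`, then `S = [n] \ J` has at most `εn/16` users, none of which has
`thr` correctly matched co-neighbours in `J`; so at most `|S|·thr` pairs of `S × J` are edges of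
both graphs. That count is a sum of `|S||J|` independent Bernoulli`(a)` indicators, and the lower
Chernoff tail, with `δ` chosen according to whether `(n-2)q_u²/log n` or `a/q_u²` is large (one of
them is, as `nρ_u² = ω(log n)`), costs `n^(-(1+ε/4)|S|)`. Summing over `S` gives `O(n^(-ε/4))`.
-/

namespace InformationTheory

open Real

lemma klFun_strictMonoOn : StrictMonoOn klFun (Set.Ici 1) :=
  strictMonoOn_of_deriv_pos (convex_Ici 1) continuous_klFun.continuousOn fun x hx => by
    rw [interior_Ici] at hx
    rw [deriv_klFun]
    exact log_pos hx

lemma klFun_pos {x : ℝ} (hx : 1 < x) : 0 < klFun x :=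
  klFun_one ▸ klFun_strictMonoOn Set.self_mem_Ici hx.le hx

lemma mul_log_le_two_mul_klFun {x : ℝ} (hx0 : 0 ≤ x) (hx : 2 ≤ log x) :
    x * log x ≤ 2 * klFun x := by
  rw [klFun_apply]
  nlinarith [mul_le_mul_of_nonneg_left hx hx0]

lemma mul_log_le_two_mul_add_four_klFun {γ R : ℝ} (hγ : 0 < γ) (hR : 0 < R) (hR4 : 4 ≤ log R) :
    γ * log R ≤ 2 * R + 4 * klFun γ := by
  have hsqrt : log R = 2 * log (√R) := by rw [log_sqrt hR.le]; ring
  rcases le_or_gt γ (√R) with h | h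
  · have h1 : log R ≤ 2 * √R := by
      have := log_le_sub_one_of_pos (sqrt_pos.mpr hR)
      linarith
    have h2 : γ * log R ≤ √R * (2 * √R) :=
      mul_le_mul h h1 (by linarith) (sqrt_nonneg _)
    have h3 : √R * (2 * √R) = 2 * R := by
      rw [← mul_assoc, mul_comm _ 2, mul_assoc, mul_self_sqrt hR.le]
    nlinarith [klFun_nonneg hγ.le]
  · have hlog : log (√R) < log γ := log_lt_log (sqrt_pos.mpr hR) h
    have := mul_log_le_two_mul_klFun hγ.le (by linarith)
    nlinarith

end InformationTheory

open InformationTheory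

section CorrBern

variable {Ω : Type*} [MeasurableSpace Ω] {P : Measure Ω} {X Y : Ω → ℝ} {q ρ : ℝ}

lemma measure_inter_eq_one_add_inter_eq_zero (hY : Measurable Y)
    (hY01 : ∀ ω, Y ω = 0 ∨ Y ω = 1) (A : Set Ω) :
    P (A ∩ {ω | Y ω = 1}) + P (A ∩ {ω | Y ω = 0}) = P A := by
  rw [← measure_inter_add_sdiff A (hY (measurableSet_singleton 1))]
  congr 2
  ext ω
  have := hY01 ω
  simp only [Set.mem_inter_iff, Set.mem_ofPred_eq, Set.mem_sdiff, Set.mem_preimage,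
    Set.mem_singleton_iff]
  constructor <;> rintro ⟨hA, h⟩ <;> refine ⟨hA, ?_⟩
  · norm_num [h]
  · tauto

namespace IsCorrBern

variable (h : IsCorrBern P X Y q ρ)
include h

lemma measure_and_one_add_measure_and_zero (a : ℝ) :
    P {ω | X ω = a ∧ Y ω = 1} + P {ω | X ω = a ∧ Y ω = 0} = P {ω | X ω = a} :=
  measure_inter_eq_one_add_inter_eq_zero h.2.1 h.2.2.2.1 _

lemma measure_one_and_add_measure_zero_and (b : ℝ) :
    P {ω | X ω = 1 ∧ Y ω = b} + P {ω | X ω = 0 ∧ Y ω = b} = P {ω | Y ω = b} := by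
  rw [← measure_inter_eq_one_add_inter_eq_zero h.1 h.2.2.1 {ω | Y ω = b}]
  congr 2 <;> ext ω <;> exact and_comm

lemma probs_nonneg [IsProbabilityMeasure P] :
    0 ≤ q ^ 2 + ρ * q * (1 - q) ∧ 0 ≤ q * (1 - q) * (1 - ρ) ∧
      0 ≤ (1 - q) ^ 2 + ρ * q * (1 - q) := by
  have htotal : P {ω | X ω = 1} + P {ω | X ω = 0} = 1 := by
    simpa using measure_inter_eq_one_add_inter_eq_zero (P := P) h.1 h.2.2.1 Set.univ
  rw [← h.measure_and_one_add_measure_and_zero, ← h.measure_and_one_add_measure_and_zero,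
    h.2.2.2.2.1, h.2.2.2.2.2.1, h.2.2.2.2.2.2.1, h.2.2.2.2.2.2.2] at htotal
  have hreal := congrArg ENNReal.toReal htotal
  simp only [ENNReal.toReal_add, ENNReal.ofReal_ne_top, ne_eq, not_false_eq_true,
    ENNReal.add_ne_top, and_self, ENNReal.toReal_ofReal', ENNReal.toReal_one] at hreal
  -- the four masses sum to `1` before truncation too, so no truncation happened
  refine ⟨?_, ?_, ?_⟩ <;>
    nlinarith [le_max_left (q ^ 2 + ρ * q * (1 - q)) 0, le_max_right (q ^ 2 + ρ * q * (1 - q)) 0,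
      le_max_left (q * (1 - q) * (1 - ρ)) 0, le_max_right (q * (1 - q) * (1 - ρ)) 0,
      le_max_left ((1 - q) ^ 2 + ρ * q * (1 - q)) 0, le_max_right ((1 - q) ^ 2 + ρ * q * (1 - q)) 0]

lemma measure_fst_eq_one [IsProbabilityMeasure P] : P {ω | X ω = 1} = ENNReal.ofReal q := by
  obtain ⟨h11, h10, -⟩ := h.probs_nonneg
  rw [← h.measure_and_one_add_measure_and_zero, h.2.2.2.2.1, h.2.2.2.2.2.1,
    ← ENNReal.ofReal_add h11 h10]
  ring_nf

lemma measure_snd_eq_one [IsProbabilityMeasure P] : P {ω | Y ω = 1} = ENNReal.ofReal q := by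
  obtain ⟨h11, h10, -⟩ := h.probs_nonneg
  rw [← h.measure_one_and_add_measure_zero_and, h.2.2.2.2.1, h.2.2.2.2.2.2.1,
    ← ENNReal.ofReal_add h11 h10]
  ring_nf

lemma both_le_one [IsProbabilityMeasure P] : q ^ 2 + ρ * q * (1 - q) ≤ 1 := by
  rw [← ENNReal.ofReal_le_one, ← h.2.2.2.2.1]
  exact prob_le_one

lemma param_range [IsProbabilityMeasure P] (hρq : 0 < ρ * (1 - q) / q) :
    0 < q ∧ q < 1 ∧ 0 < ρ ∧ ρ ≤ 1 := by
  obtain ⟨-, h10, -⟩ := h.probs_nonneg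
  have hq : q ≠ 0 := by rintro rfl; simp at hρq
  have hρq' : 0 < ρ * (1 - q) * q := by
    have := mul_pos hρq (mul_self_pos.mpr hq)
    rwa [show ρ * (1 - q) / q * (q * q) = ρ * (1 - q) * q by field_simp] at this
  have hq1 : 0 < q * (1 - q) := by nlinarith
  have hρ1 : ρ ≤ 1 := by nlinarith
  have hq01 : 0 < q ∧ q < 1 := by
    rcases lt_or_gt_of_ne hq with hq | hq
    · nlinarith
    · exact ⟨hq, by nlinarith⟩
  exact ⟨hq01.1, hq01.2, by nlinarith, hρ1⟩

end IsCorrBern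

end CorrBern

section Independence

variable {Ω ι κ : Type*} [MeasurableSpace Ω] {P : Measure Ω}

lemma ProbabilityTheory.iIndepFun.iIndepSet_preimage {β : Type*} [MeasurableSpace β]
    {Z : ι → Ω → β} (hZ : iIndepFun Z P) (hZm : ∀ i, Measurable (Z i)) {g : κ → ι}
    (hg : g.Injective) {S : κ → Set β} (hS : ∀ k, MeasurableSet (S k)) :
    iIndepSet (fun k => Z (g k) ⁻¹' S k) P := by
  rw [iIndepSet_iff_meas_biInter fun k => hZm _ (hS k)]
  exact fun F => (hZ.precomp hg).meas_biInter fun k _ => ⟨S k, hS k, rfl⟩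

lemma ProbabilityTheory.iIndepSet.measure_biInter_inter_of_sumElim {E₁ E₂ : κ → Set Ω}
    (h : iIndepSet (Sum.elim E₁ E₂) P) (F : Finset κ) :
    P (⋂ k ∈ F, E₁ k ∩ E₂ k) = ∏ k ∈ F, P (E₁ k) * P (E₂ k) := by
  classical
  have hF := h.meas_biInter (F.disjSum F)
  rw [Finset.prod_disjSum] at hF
  simp only [Sum.elim_inl, Sum.elim_inr] at hF
  rw [Finset.prod_mul_distrib, ← hF]
  congr 1
  ext ω
  simp [Finset.mem_disjSum, imp_and, forall_and]

lemma ProbabilityTheory.iIndepSet.measure_inter_of_sumElim {E₁ E₂ : κ → Set Ω}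
    (h : iIndepSet (Sum.elim E₁ E₂) P) (k : κ) : P (E₁ k ∩ E₂ k) = P (E₁ k) * P (E₂ k) := by
  simpa using h.measure_biInter_inter_of_sumElim {k}

lemma ProbabilityTheory.iIndepSet.inter_of_sumElim {E₁ E₂ : κ → Set Ω}
    (h : iIndepSet (Sum.elim E₁ E₂) P) (h₁ : ∀ k, MeasurableSet (E₁ k))
    (h₂ : ∀ k, MeasurableSet (E₂ k)) : iIndepSet (fun k => E₁ k ∩ E₂ k) P := by
  rw [iIndepSet_iff_meas_biInter fun k => (h₁ k).inter (h₂ k)]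
  intro F
  simp_rw [h.measure_biInter_inter_of_sumElim F, h.measure_inter_of_sumElim]

end Independence

section Chernoff

open Real
open scoped Classical

variable {Ω κ : Type*} [MeasurableSpace Ω] {P : Measure Ω} {s : Finset κ} {E : κ → Set Ω}
  {p : ℝ}

lemma mgf_indicator_one [IsProbabilityMeasure P] {A : Set Ω} (hA : MeasurableSet A) (t : ℝ) :
    mgf (A.indicator fun _ => 1) P t = 1 + P.real A * (exp t - 1) := by
  have hpt : (fun ω => exp (t * A.indicator (fun _ => 1) ω)) =
      fun ω => 1 + (exp t - 1) * A.indicator (fun _ => 1) ω := by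
    ext ω
    by_cases hω : ω ∈ A <;> simp [hω]
  rw [mgf, hpt, integral_add (integrable_const 1)
    (((integrable_const (1 : ℝ)).indicator hA).const_mul _), integral_const_mul,
    ← Pi.one_def, integral_indicator_one hA]
  simp [Pi.one_def, mul_comm]

omit [MeasurableSpace Ω] in
lemma natCast_card_filter_mem_eq_sum_indicator :
    (fun ω => (#{u ∈ s | ω ∈ E u} : ℝ)) = ∑ u : s, (E u).indicator fun _ => 1 := by
  ext ω
  rw [Finset.natCast_card_filter, ← Finset.sum_coe_sort s, Finset.sum_apply]
  simp [Set.indicator_apply]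

lemma mgf_card_filter_mem_le (hind : iIndepSet (fun u : s => E u) P)
    (hE : ∀ u ∈ s, MeasurableSet (E u)) (hp : ∀ u ∈ s, P.real (E u) = p) (t : ℝ) :
    mgf (fun ω => (#{u ∈ s | ω ∈ E u} : ℝ)) P t ≤ exp (#s * p * (exp t - 1)) := by
  have := hind.isProbabilityMeasure
  have hmeas : ∀ u : s, MeasurableSet (E u) := fun u => hE u u.2
  rw [natCast_card_filter_mem_eq_sum_indicator,
    hind.iIndepFun_indicator.mgf_sum fun u => measurable_const.indicator (hmeas u)]
  simp_rw [mgf_indicator_one (hmeas _), hp _ (Subtype.prop _), Finset.prod_const,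
    Finset.card_univ, Fintype.card_coe]
  rcases s.eq_empty_or_nonempty with rfl | ⟨u, hu⟩
  · simp
  have hp0 : 0 ≤ p := hp u hu ▸ measureReal_nonneg
  have hp1 : p ≤ 1 := hp u hu ▸ measureReal_le_one
  calc (1 + p * (exp t - 1)) ^ #s ≤ exp (p * (exp t - 1)) ^ #s :=
        pow_le_pow_left₀ (by nlinarith [exp_pos t])
          (by linarith [add_one_le_exp (p * (exp t - 1))]) _
    _ = exp (#s * p * (exp t - 1)) := by rw [← exp_nat_mul, mul_assoc]

lemma integrable_exp_mul_card_filter_mem [IsFiniteMeasure P]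
    (hE : ∀ u ∈ s, MeasurableSet (E u)) (t : ℝ) :
    Integrable (fun ω => exp (t * #{u ∈ s | ω ∈ E u})) P := by
  have hmeas : Measurable fun ω => (#{u ∈ s | ω ∈ E u} : ℝ) := by
    rw [natCast_card_filter_mem_eq_sum_indicator, Finset.sum_fn]
    exact Finset.measurable_sum _ fun (u : s) _ =>
      (measurable_const (a := (1 : ℝ))).indicator (hE u u.2)
  refine .of_bound (hmeas.const_mul t).exp.aestronglyMeasurable (exp (|t| * #s))
    (ae_of_all _ fun ω => ?_)
  have hcard : (#{u ∈ s | ω ∈ E u} : ℝ) ≤ #s := by exact_mod_cast Finset.card_filter_le _ _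
  rw [Real.norm_of_nonneg (exp_pos _).le, exp_le_exp]
  nlinarith [le_abs_self t, abs_nonneg t, (Nat.cast_nonneg _ : (0 : ℝ) ≤ #{u ∈ s | ω ∈ E u})]

variable (hind : iIndepSet (fun u : s => E u) P) (hE : ∀ u ∈ s, MeasurableSet (E u))
  (hp : ∀ u ∈ s, P.real (E u) = p)
include hind hE hp

lemma measureReal_card_filter_mem_ge_le {γ : ℝ} (hγ : 1 ≤ γ) :
    P.real {ω | γ * (#s * p) ≤ #{u ∈ s | ω ∈ E u}} ≤ exp (-(#s * p * klFun γ)) := by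
  have := hind.isProbabilityMeasure
  have hγ0 : 0 < γ := by linarith
  calc _ ≤ exp (-log γ * (γ * (#s * p))) * mgf (fun ω => (#{u ∈ s | ω ∈ E u} : ℝ)) P (log γ) :=
        measure_ge_le_exp_mul_mgf _ (log_nonneg hγ) (integrable_exp_mul_card_filter_mem hE _)
    _ ≤ exp (-log γ * (γ * (#s * p))) * exp (#s * p * (exp (log γ) - 1)) := by
        gcongr
        exact mgf_card_filter_mem_le hind hE hp _
    _ = exp (-(#s * p * klFun γ)) := by
        rw [← exp_add, exp_log hγ0, klFun_apply]
        ring_nf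

lemma measureReal_card_filter_mem_le_le {δ : ℝ} (hδ0 : 0 < δ) (hδ1 : δ ≤ 1) (c : ℝ) :
    P.real {ω | (#{u ∈ s | ω ∈ E u} : ℝ) ≤ c} ≤ exp (-(#s * p * (1 - δ) + c * log δ)) := by
  have := hind.isProbabilityMeasure
  calc _ ≤ exp (-log δ * c) * mgf (fun ω => (#{u ∈ s | ω ∈ E u} : ℝ)) P (log δ) :=
        measure_le_le_exp_mul_mgf _ (log_nonpos hδ0.le hδ1)
          (integrable_exp_mul_card_filter_mem hE _)
    _ ≤ exp (-log δ * c) * exp (#s * p * (exp (log δ) - 1)) := by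
        gcongr
        exact mgf_card_filter_mem_le hind hE hp _
    _ = exp (-(#s * p * (1 - δ) + c * log δ)) := by
        rw [← exp_add, exp_log hδ0]
        ring_nf

end Chernoff

section Counting

open scoped Classical

variable {Ω : Type*} {n m : ℕ} (G : GraphPair Ω n m) (ω : Ω) (π : Equiv.Perm (Fin n))

lemma natCast_card_univ_erase_erase {i k : Fin n} (hki : k ≠ i) :
    (#((univ.erase i).erase k) : ℝ) = n - 2 := by
  have h1 : #((univ.erase i).erase k) + 1 = #(univ.erase i) :=
    Finset.card_erase_add_one (Finset.mem_erase.mpr ⟨hki, Finset.mem_univ _⟩)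
  have h2 := Finset.card_erase_add_one (Finset.mem_univ i)
  rw [Finset.card_univ, Fintype.card_fin] at h2
  have : (#((univ.erase i).erase k) : ℝ) + 2 = n := by exact_mod_cast (by omega : _ + 2 = n)
  linarith

lemma NuJ_univ_eq_card_filter (i j : Fin n) :
    NuJ G ω univ π i j = #{u ∈ (univ.erase i).erase (π.symm j) |
      ω ∈ {ω | G.Au s(i, u) ω = 1} ∩ {ω | G.Bu (Sym2.map π s(π.symm j, u)) ω = 1}} := by
  unfold NuJ
  congr 1
  ext u
  simp only [Finset.mem_filter, Finset.mem_univ, true_and, Finset.mem_erase,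
    Set.mem_inter_iff, Set.mem_ofPred_eq, Sym2.map_mk, Equiv.apply_symm_apply, ne_eq,
    ← Equiv.eq_symm_apply]
  tauto

lemma sum_NuJ_compl_eq_card_filter (S : Finset (Fin n)) :
    ∑ i ∈ S, NuJ G ω Sᶜ π i (π i) = #{x ∈ S ×ˢ Sᶜ |
      ω ∈ {ω | G.Au s(x.1, x.2) ω = 1 ∧ G.Bu (Sym2.map π s(x.1, x.2)) ω = 1}} := by
  rw [Finset.card_filter, Finset.sum_product]
  refine Finset.sum_congr rfl fun i hi => ?_
  unfold NuJ
  rw [Finset.card_filter]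
  refine Finset.sum_congr rfl fun u hu => ?_
  have hui : u ≠ i := fun h => (Finset.mem_compl.mp hu) (h ▸ hi)
  simp only [hui, Sym2.map_mk, ne_eq, not_false_eq_true, true_and, π.injective.ne hui,
    Set.mem_ofPred_eq]
  congr

end Counting

section Model

open scoped Classical

variable {Ω : Type*} [MeasurableSpace Ω] {n m : ℕ} {G : GraphPair Ω n m} {P : Measure Ω}
  {π : Equiv.Perm (Fin n)} {qu ρu qa ρa : ℝ}

namespace GraphPair.IsAttrER

variable (hmodel : G.IsAttrER P π qu ρu qa ρa)
include hmodel

lemma measurableSet_Au (e : {e : Sym2 (Fin n) // ¬ e.IsDiag}) :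
    MeasurableSet {ω | G.Au e ω = 1} :=
  (hmodel.2.1 e e.2).1 (measurableSet_singleton 1)

lemma measurableSet_Bu (e : {e : Sym2 (Fin n) // ¬ e.IsDiag}) :
    MeasurableSet {ω | G.Bu (Sym2.map π e) ω = 1} :=
  (hmodel.2.1 e e.2).2.1 (measurableSet_singleton 1)

lemma iIndepFun_user :
    iIndepFun (fun e : {e : Sym2 (Fin n) // ¬ e.IsDiag} =>
      fun ω => (G.Au e ω, G.Bu (Sym2.map π e) ω)) P :=
  hmodel.2.2.2.precomp Sum.inl_injective

lemma measurable_user (e : {e : Sym2 (Fin n) // ¬ e.IsDiag}) :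
    Measurable fun ω => (G.Au e ω, G.Bu (Sym2.map π e) ω) :=
  (hmodel.2.1 e e.2).1.prodMk (hmodel.2.1 e e.2).2.1

lemma iIndepSet_edge_in_both {κ : Type*} {e : κ → {e : Sym2 (Fin n) // ¬ e.IsDiag}}
    (he : e.Injective) :
    iIndepSet (fun k => {ω | G.Au (e k) ω = 1 ∧ G.Bu (Sym2.map π (e k)) ω = 1}) P :=
  hmodel.iIndepFun_user.iIndepSet_preimage hmodel.measurable_user he
    (S := fun _ => {x : ℝ × ℝ | x.1 = 1 ∧ x.2 = 1}) fun _ =>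
      (measurable_fst (measurableSet_singleton 1)).inter
        (measurable_snd (measurableSet_singleton 1))

lemma iIndepSet_sumElim {κ : Type*} {e₁ e₂ : κ → {e : Sym2 (Fin n) // ¬ e.IsDiag}}
    (he : (Sum.elim e₁ e₂).Injective) :
    iIndepSet (Sum.elim (fun k => {ω | G.Au (e₁ k) ω = 1})
      (fun k => {ω | G.Bu (Sym2.map π (e₂ k)) ω = 1})) P := by
  convert hmodel.iIndepFun_user.iIndepSet_preimage hmodel.measurable_user he
    (S := Sum.elim (fun _ => {x : ℝ × ℝ | x.1 = 1}) (fun _ => {x : ℝ × ℝ | x.2 = 1}))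
    (by rintro (k | k) <;> simp only [Sum.elim_inl, Sum.elim_inr] <;>
      [exact measurable_fst (measurableSet_singleton 1);
       exact measurable_snd (measurableSet_singleton 1)]) using 1
  ext (k | k) <;> rfl

lemma measureReal_NuJ_univ_ge_le (hq : 0 ≤ qu) {γ : ℝ} (hγ : 1 ≤ γ) {i j : Fin n}
    (hj : j ≠ π i) :
    P.real {ω | γ * ((n : ℝ) - 2) * qu ^ 2 ≤ NuJ G ω univ π i j} ≤
      Real.exp (-(((n : ℝ) - 2) * qu ^ 2 * klFun γ)) := by
  have := hmodel.1
  have hji : π.symm j ≠ i := fun h => hj (by rw [← h, Equiv.apply_symm_apply])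
  set U := (univ.erase i).erase (π.symm j)
  have hU : ∀ u ∈ U, u ≠ π.symm j ∧ u ≠ i := fun u hu => by
    simpa [U, Finset.mem_erase] using hu
  let e₁ : U → {e : Sym2 (Fin n) // ¬ e.IsDiag} := fun u =>
    ⟨s(i, u), by simpa [eq_comm] using (hU u u.2).2⟩
  let e₂ : U → {e : Sym2 (Fin n) // ¬ e.IsDiag} := fun u =>
    ⟨s(π.symm j, u), by simpa [eq_comm] using (hU u u.2).1⟩
  have he : (Sum.elim e₁ e₂).Injective := by
    refine Function.Injective.sumElim (fun u v h => ?_) (fun u v h => ?_) fun u v h => ?_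
    all_goals simp only [e₁, e₂, Subtype.mk.injEq, Sym2.eq_iff] at h
    · exact Subtype.ext (h.elim (·.2) fun h' => (hU u u.2).2 h'.2 |>.elim)
    · exact Subtype.ext (h.elim (·.2) fun h' => (hU u u.2).1 h'.2 |>.elim)
    · exact h.elim (fun h' => hji h'.1.symm) fun h' => (hU v v.2).2 h'.1.symm
  have hind := hmodel.iIndepSet_sumElim he
  have hp : ∀ u ∈ U, P.real ({ω | G.Au s(i, u) ω = 1} ∩
      {ω | G.Bu (Sym2.map π s(π.symm j, u)) ω = 1}) = qu ^ 2 := fun u hu => by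
    rw [measureReal_def, hind.measure_inter_of_sumElim ⟨u, hu⟩]
    simp only [e₁, e₂]
    rw [(hmodel.2.1 _ (e₁ ⟨u, hu⟩).2).measure_fst_eq_one,
      (hmodel.2.1 _ (e₂ ⟨u, hu⟩).2).measure_snd_eq_one, ENNReal.toReal_mul,
      ENNReal.toReal_ofReal hq, sq]
  have := measureReal_card_filter_mem_ge_le (s := U)
    (hind.inter_of_sumElim (fun u => hmodel.measurableSet_Au (e₁ u))
      fun u => hmodel.measurableSet_Bu (e₂ u))
    (fun u hu => (hmodel.measurableSet_Au (e₁ ⟨u, hu⟩)).inter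
      (hmodel.measurableSet_Bu (e₂ ⟨u, hu⟩))) hp hγ
  rw [natCast_card_univ_erase_erase hji, ← mul_assoc] at this
  simp only [NuJ_univ_eq_card_filter]
  convert this

lemma measureReal_sum_NuJ_compl_le (S : Finset (Fin n)) {δ : ℝ} (hδ0 : 0 < δ) (hδ1 : δ ≤ 1)
    (c : ℝ) :
    P.real {ω | ((∑ i ∈ S, NuJ G ω Sᶜ π i (π i) : ℕ) : ℝ) ≤ c} ≤
      Real.exp (-(#S * #Sᶜ * (qu ^ 2 + ρu * qu * (1 - qu)) * (1 - δ) + c * Real.log δ)) := by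
  have hS : ∀ x ∈ S ×ˢ Sᶜ, x.1 ∈ S ∧ x.2 ∉ S := fun x hx => by
    simpa using Finset.mem_product.mp hx
  let e : S ×ˢ Sᶜ → {e : Sym2 (Fin n) // ¬ e.IsDiag} := fun x =>
    ⟨s(x.1.1, x.1.2), fun h => (hS x x.2).2 (Sym2.mk_isDiag_iff.mp h ▸ (hS x x.2).1)⟩
  have he : e.Injective := fun x y h => by
    simp only [e, Subtype.mk.injEq, Sym2.eq_iff] at h
    refine Subtype.ext (h.elim (fun h' => Prod.ext h'.1 h'.2) fun h' => ?_)
    exact ((hS y y.2).2 (h'.1 ▸ (hS x x.2).1)).elim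
  have hp : ∀ x ∈ S ×ˢ Sᶜ, P.real {ω | G.Au s(x.1, x.2) ω = 1 ∧
      G.Bu (Sym2.map π s(x.1, x.2)) ω = 1} = qu ^ 2 + ρu * qu * (1 - qu) := fun x hx => by
    have h := hmodel.2.1 _ (e ⟨x, hx⟩).2
    have := hmodel.1
    rw [measureReal_def, h.2.2.2.2.1, ENNReal.toReal_ofReal h.probs_nonneg.1]
  have := measureReal_card_filter_mem_le_le (hmodel.iIndepSet_edge_in_both he)
    (fun x hx => ((hmodel.2.1 _ (e ⟨x, hx⟩).2).1 (measurableSet_singleton 1)).inter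
      ((hmodel.2.1 _ (e ⟨x, hx⟩).2).2.1 (measurableSet_singleton 1))) hp hδ0 hδ1 c
  rw [Finset.card_product] at this
  simp only [sum_NuJ_compl_eq_card_filter]
  push_cast at this
  convert this

end GraphPair.IsAttrER

end Model

section Greedy

open scoped Classical

variable {Ω : Type*} {n m : ℕ} {G : GraphPair Ω n m} {ω : Ω} {π : Equiv.Perm (Fin n)}
  {thr : ℝ}

lemma NuJ_congr {J : Finset (Fin n)} {g g' : Fin n → Fin n} (h : ∀ u ∈ J, g u = g' u)
    (i j : Fin n) : NuJ G ω J g i j = NuJ G ω J g' i j := by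
  unfold NuJ
  congr 1
  exact Finset.filter_congr fun u hu => by rw [h u hu]

lemma NuJ_mono {J J' : Finset (Fin n)} (hJ : J ⊆ J') (g : Fin n → Fin n) (i j : Fin n) :
    NuJ G ω J g i j ≤ NuJ G ω J' g i j :=
  Finset.card_le_card (Finset.filter_subset_filter _ hJ)

lemma StepSparse.subset_and_agree {st st' : Finset (Fin n) × (Fin n → Fin n)}
    (hwrong : ∀ i j, j ≠ π i → (NuJ G ω univ π i j : ℝ) < thr)
    (hst : ∀ u ∈ st.1, st.2 u = π u) (hstep : StepSparse G ω thr st st') :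
    st.1 ⊆ st'.1 ∧ ∀ u ∈ st'.1, st'.2 u = π u := by
  obtain ⟨i, j, hi, -, hthr, h1, h2⟩ := hstep
  have hj : j = π i := by
    by_contra hj
    refine (hwrong i j hj).not_ge (hthr.trans ?_)
    rw [NuJ_congr hst]
    exact_mod_cast NuJ_mono (Finset.subset_univ _) _ _ _
  refine ⟨h1 ▸ Finset.subset_insert _ _, fun u hu => ?_⟩
  rw [h1, Finset.mem_insert] at hu
  rcases hu with rfl | hu
  · rw [h2, Function.update_self, hj]
  · rw [h2, Function.update_of_ne (ne_of_mem_of_not_mem hu hi), hst u hu]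

lemma StepSparse.exists_of_agree {st : Finset (Fin n) × (Fin n → Fin n)}
    (hst : ∀ u ∈ st.1, st.2 u = π u)
    (hcount : (#st.1ᶜ : ℝ) * thr < ((∑ i ∈ st.1ᶜ, NuJ G ω st.1 π i (π i) : ℕ) : ℝ)) :
    ∃ st', StepSparse G ω thr st st' := by
  push_cast at hcount
  rw [← nsmul_eq_mul, ← Finset.sum_const] at hcount
  obtain ⟨i, hi, hthr⟩ := Finset.exists_lt_of_sum_lt hcount
  rw [Finset.mem_compl] at hi
  refine ⟨(insert i st.1, Function.update st.2 i (π i)), i, π i, hi, fun u hu h => hi ?_, ?_,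
    rfl, rfl⟩
  · rw [hst u hu, π.injective.eq_iff] at h
    exact h ▸ hu
  · rw [NuJ_congr hst]
    exact hthr.le

theorem StepSparse.correct_of_terminal {I₀ : Finset (Fin n)} {ph : Fin n → Fin n} {M : ℝ}
    {st : Finset (Fin n) × (Fin n → Fin n)} (hph : ∀ u ∈ I₀, ph u = π u) (hI₀ : M ≤ #I₀)
    (hwrong : ∀ i j, j ≠ π i → (NuJ G ω univ π i j : ℝ) < thr)
    (hstuck : ∀ S : Finset (Fin n), S.Nonempty → M ≤ #Sᶜ →
      (#S : ℝ) * thr < ((∑ i ∈ S, NuJ G ω Sᶜ π i (π i) : ℕ) : ℝ))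
    (hrun : Relation.ReflTransGen (StepSparse G ω thr) (I₀, ph) st)
    (hterm : ∀ st', ¬ StepSparse G ω thr st st') :
    st.1 = univ ∧ st.2 = π := by
  have hinv : I₀ ⊆ st.1 ∧ ∀ u ∈ st.1, st.2 u = π u := by
    clear hterm
    induction hrun with
    | refl => exact ⟨subset_rfl, hph⟩
    | tail _ hstep ih =>
      have := hstep.subset_and_agree hwrong ih.2
      exact ⟨ih.1.trans this.1, this.2⟩
  have huniv : st.1 = univ := by
    by_contra hne
    have hne' : st.1ᶜ.Nonempty := by
      rwa [Finset.nonempty_iff_ne_empty, ne_eq, Finset.compl_eq_empty_iff]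
    have hM : M ≤ #st.1ᶜᶜ := by
      rw [compl_compl]
      exact hI₀.trans (by exact_mod_cast Finset.card_le_card hinv.1)
    have := hstuck _ hne' hM
    rw [compl_compl] at this
    obtain ⟨st', hstep⟩ := StepSparse.exists_of_agree hinv.2 this
    exact hterm st' hstep
  exact ⟨huniv, funext fun u => hinv.2 u (huniv ▸ Finset.mem_univ u)⟩

end Greedy

section Numerics

open Real

variable {ε L b γ m₀ R : ℝ}

lemma stuck_exponent_of_dense (hε : 0 < ε) (hε2 : ε ≤ 2) (hb : 0 < b) (hγ : 1 ≤ γ)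
    (hγε : γ ≤ 1 + ε / 16) (hm : (1 - ε / 16) * (1 + ε) * b ≤ m₀)
    (hL : (1 + ε / 4) * L ≤ 3 * ε ^ 2 / 128 * b) :
    (1 + ε / 4) * L ≤ γ * b * log (1 - ε / 4) + m₀ * (1 - (1 - ε / 4)) := by
  have hd : 0 < 1 - ε / 4 := by linarith
  obtain ⟨w, hw_def⟩ : ∃ w, w = (1 - ε / 4)⁻¹ - 1 := ⟨_, rfl⟩
  have hlog : -w ≤ log (1 - ε / 4) := by
    have := one_sub_inv_le_log_of_pos hd
    rw [hw_def]
    linarith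
  have hwd : w * (1 - ε / 4) = ε / 4 := by
    rw [hw_def, sub_mul, inv_mul_cancel₀ hd.ne']
    ring
  have hw : 0 ≤ w := by nlinarith
  have hγlog : -((1 + ε / 16) * b * w) ≤ γ * b * log (1 - ε / 4) := by
    have := mul_le_mul_of_nonneg_left hlog (by positivity : 0 ≤ γ * b)
    nlinarith [mul_le_mul_of_nonneg_right hγε (mul_nonneg hb.le hw)]
  have hpoly :
      3 * ε ^ 2 / 128 * b ≤ (1 - ε / 16) * (1 + ε) * b * (ε / 4) - (1 + ε / 16) * b * w := by
    rw [← sub_nonneg, ← mul_nonneg_iff_of_pos_right hd]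
    have hε' : 0 ≤ 17 / 32 - 35 / 128 * ε + ε ^ 2 / 64 := by nlinarith
    have : 0 ≤ b * (ε / 4) * ε * (17 / 32 - 35 / 128 * ε + ε ^ 2 / 64) := by positivity
    linear_combination this + (1 + ε / 16) * b * hwd
  nlinarith

lemma stuck_exponent_of_ratio_large (hε : 0 < ε) (hε2 : ε ≤ 2) (hL : 0 ≤ L) (hb : 0 < b)
    (hγ : 0 < γ) (hR : 0 < R) (hf : klFun γ * b = 3 * L) (hm₁ : (1 + 13 * ε / 16) * L ≤ m₀)
    (hm₂ : 7 / 8 * (R * b) ≤ m₀) (hR4 : 4 ≤ log R) (hRε : log (7 / ε) ≤ ε / 100 * log R) :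
    (1 + ε / 4) * L ≤
      γ * b * log (exp (-(ε / 100 * log R))) + m₀ * (1 - exp (-(ε / 100 * log R))) := by
  rw [log_exp]
  have hδ : exp (-(ε / 100 * log R)) ≤ ε / 7 :=
    calc _ ≤ exp (-log (7 / ε)) := exp_le_exp.mpr (by linarith)
      _ = ε / 7 := by rw [exp_neg, exp_log (by positivity), inv_div]
  have hm₀ : 0 ≤ m₀ := by nlinarith
  have hγR : γ * b * log R ≤ 2 * (R * b) + 12 * L := by
    nlinarith [mul_le_mul_of_nonneg_right (mul_log_le_two_mul_add_four_klFun hγ hR hR4) hb.le]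
  have h1 : m₀ * (1 - ε / 7) ≤ m₀ * (1 - exp (-(ε / 100 * log R))) :=
    mul_le_mul_of_nonneg_left (by linarith) hm₀
  have h2 : ε / 100 * (γ * b * log R) ≤ ε / 100 * (16 / 7 * m₀ + 12 * L) :=
    mul_le_mul_of_nonneg_left (by linarith) (by positivity)
  have h3 : (1 + 13 * ε / 16) * L * (1 - ε / 7 - 4 * ε / 175) ≤ m₀ * (1 - ε / 7 - 4 * ε / 175) :=
    mul_le_mul_of_nonneg_right hm₁ (by linarith)
  nlinarith [mul_nonneg (mul_nonneg hε.le hL) (by linarith : (0 : ℝ) ≤ 2 - ε)]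

/- With `b = (n-2)q²` and `R = a/q²`: `denseConst ε · log n ≤ b` forces `γ₁ ≤ 1 + ε/16` and
`(1 + ε/4) log n ≤ (3ε²/128) b`, while `ratioConst ε ≤ R` makes `δ = R^(-ε/100) ≤ ε/7`. -/
noncomputable def denseConst (ε : ℝ) : ℝ :=
  max (3 / klFun (1 + ε / 16)) (128 * (1 + ε / 4) / (3 * ε ^ 2))

noncomputable def ratioConst (ε : ℝ) : ℝ := exp (max 4 (100 / ε * log (7 / ε)))

lemma exists_stuck_exponent (hε : 0 < ε) (hε2 : ε ≤ 2) (hL : 0 ≤ L) (hb : 0 < b) (hγ : 1 < γ)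
    (hf : klFun γ * b = 3 * L) (hR : 1 + ε ≤ R) (hm₁ : (1 + 13 * ε / 16) * L ≤ m₀)
    (hm₂ : (1 - ε / 16) * (R * b) ≤ m₀) (hcase : denseConst ε * L ≤ b ∨ ratioConst ε ≤ R) :
    ∃ δ, 0 < δ ∧ δ ≤ 1 ∧ (1 + ε / 4) * L ≤ γ * b * log δ + m₀ * (1 - δ) := by
  rcases hcase with hdense | hratio
  · refine ⟨1 - ε / 4, by linarith, by linarith,
      stuck_exponent_of_dense hε hε2 hb hγ.le ?_ ?_ ?_⟩
    · have hk : 0 < klFun (1 + ε / 16) := klFun_pos (by linarith)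
      have h := (mul_le_mul_of_nonneg_right (le_max_left _ _) hL).trans hdense
      rw [div_mul_eq_mul_div, div_le_iff₀ hk] at h
      have : klFun γ ≤ klFun (1 + ε / 16) := le_of_mul_le_mul_left (by linarith) hb
      exact (klFun_strictMonoOn.le_iff_le hγ.le (Set.mem_Ici.mpr (by linarith))).mp this
    · have := mul_le_mul_of_nonneg_left hR (by nlinarith : 0 ≤ (1 - ε / 16) * b)
      nlinarith
    · have h := (mul_le_mul_of_nonneg_right (le_max_right _ _) hL).trans hdense
      rw [div_mul_eq_mul_div, div_le_iff₀ (by positivity)] at h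
      nlinarith
  · have hRpos : 0 < R := by linarith
    have hlogR : max 4 (100 / ε * log (7 / ε)) ≤ log R := by
      rw [← log_exp (max _ _)]
      exact log_le_log (exp_pos _) hratio
    have hRε := (le_max_right _ _).trans hlogR
    rw [div_mul_eq_mul_div, div_le_iff₀ hε] at hRε
    refine ⟨_, exp_pos _, exp_le_one_iff.mpr ?_, stuck_exponent_of_ratio_large hε hε2 hL hb
      (by linarith) hRpos hf hm₁ (by nlinarith [mul_pos hRpos hb])
      ((le_max_left _ _).trans hlogR) (by linarith)⟩
    have := (le_max_left _ _).trans hlogR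
    nlinarith

lemma dense_or_ratio_large {N q ρ C Rs : ℝ} (hN : 4 ≤ N) (hL : 0 ≤ L) (hq : 0 < q)
    (hρ : 0 ≤ ρ) (hρ1 : ρ ≤ 1) (hRs : 0 < Rs)
    (hK : max (16 * C) (8 * C * Rs ^ 2) * L ≤ N * ρ ^ 2) :
    C * L ≤ (N - 2) * q ^ 2 ∨ Rs ≤ (q ^ 2 + ρ * q * (1 - q)) / q ^ 2 := by
  refine or_iff_not_imp_left.mpr fun h => ?_
  rw [not_le] at h
  have hNρ : N * ρ ^ 2 ≤ N := mul_le_of_le_one_right (by linarith) (pow_le_one₀ hρ hρ1)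
  have h16 := (mul_le_mul_of_nonneg_right (le_max_left _ _) hL).trans hK
  have h8 := (mul_le_mul_of_nonneg_right (le_max_right _ _) hL).trans hK
  have hNq : N * q ^ 2 < 2 * (C * L) := by nlinarith
  have hq2 : q ≤ 1 / 2 := by
    have : q ^ 2 < 1 / 8 := by
      by_contra hc
      nlinarith [mul_le_mul_of_nonneg_left (not_lt.mp hc) (by linarith : (0 : ℝ) ≤ N)]
    nlinarith
  have hρq : 2 * Rs * q ≤ ρ := by
    refine (pow_le_pow_iff_left₀ (by positivity) hρ two_ne_zero).mp ?_
    nlinarith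
  rw [le_div_iff₀ (by positivity)]
  nlinarith

lemma exists_stuck_exponent_of_params {N q ρ : ℝ} (hε : 0 < ε) (hε2 : ε ≤ 2) (hN : 4 ≤ N)
    (hL : 0 ≤ L) (hq : 0 < q) (hρ : 0 < ρ) (hρ1 : ρ ≤ 1)
    (hK : max (16 * denseConst ε) (8 * denseConst ε * ratioConst ε ^ 2) * L ≤ N * ρ ^ 2)
    (h2 : (1 + ε) * L ≤ N * q * (q + ρ * (1 - q))) (h3 : ε ≤ ρ * (1 - q) / q) (hγ : 1 < γ)
    (hf : klFun γ * ((N - 2) * q ^ 2) = 3 * L) :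
    ∃ δ, 0 < δ ∧ δ ≤ 1 ∧ (1 + ε / 4) * L ≤
      γ * (N - 2) * q ^ 2 * log δ + (1 - ε / 16) * N * (q ^ 2 + ρ * q * (1 - q)) * (1 - δ) := by
  have hq2 : 0 < q ^ 2 := by positivity
  have h3' : ε * q ≤ ρ * (1 - q) := by rwa [le_div_iff₀ hq] at h3
  have ha : N * (q ^ 2 + ρ * q * (1 - q)) = N * q * (q + ρ * (1 - q)) := by ring
  have ha0 : 0 ≤ q ^ 2 + ρ * q * (1 - q) := by nlinarith
  have hR : 1 + ε ≤ (q ^ 2 + ρ * q * (1 - q)) / q ^ 2 := by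
    rw [le_div_iff₀ hq2]
    nlinarith [mul_le_mul_of_nonneg_right h3' hq.le]
  have hm₁ : (1 + 13 * ε / 16) * L ≤ (1 - ε / 16) * (N * (q ^ 2 + ρ * q * (1 - q))) := by
    have := mul_le_mul_of_nonneg_left (ha ▸ h2) (by linarith : (0 : ℝ) ≤ 1 - ε / 16)
    nlinarith [mul_nonneg (mul_nonneg hε.le hL) (by linarith : (0 : ℝ) ≤ 2 - ε)]
  have hm₂ : (1 - ε / 16) * ((q ^ 2 + ρ * q * (1 - q)) / q ^ 2 * ((N - 2) * q ^ 2)) ≤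
      (1 - ε / 16) * (N * (q ^ 2 + ρ * q * (1 - q))) := by
    rw [div_mul_eq_mul_div, mul_comm, ← mul_assoc, mul_div_assoc, div_self hq2.ne', mul_one]
    nlinarith
  obtain ⟨δ, hδ0, hδ1, hδ⟩ := exists_stuck_exponent hε hε2 hL (by nlinarith) hγ hf hR hm₁ hm₂
    (dense_or_ratio_large hN hL hq hρ.le hρ1 (exp_pos _) hK)
  exact ⟨δ, hδ0, hδ1, by linarith⟩

end Numerics

lemma sum_pow_card_nonempty_le {n : ℕ} {y : ℝ} (hy : 0 ≤ y) (hny : n * y ≤ 1) :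
    ∑ S ∈ (univ : Finset (Finset (Fin n))).filter Finset.Nonempty, y ^ #S ≤ 2 * (n * y) := by
  have htotal : ∑ S : Finset (Fin n), y ^ #S = (y + 1) ^ n := by
    simpa using Fin.sum_pow_mul_eq_add_pow y 1
  have hempty : ∑ S ∈ (univ : Finset (Finset (Fin n))).filter (¬ ·.Nonempty), y ^ #S = 1 := by
    rw [Finset.sum_eq_single_of_mem ∅ (by simp) fun S hS hne => by simp_all]
    simp
  rw [← Finset.sum_filter_add_sum_filter_not univ Finset.Nonempty, hempty] at htotal
  have hexp : (y + 1) ^ n ≤ Real.exp (n * y) := by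
    rw [Real.exp_nat_mul]
    exact pow_le_pow_left₀ (by linarith) (by linarith [Real.add_one_le_exp y]) n
  have hny0 : 0 ≤ n * y := mul_nonneg (Nat.cast_nonneg _) hy
  have := Real.abs_exp_sub_one_le (x := n * y) (by rwa [abs_of_nonneg hny0])
  rw [abs_of_nonneg hny0] at this
  linarith [le_abs_self (Real.exp (n * y) - 1)]

section BadEvents

open scoped Classical

variable {Ω : Type*} [MeasurableSpace Ω] {n m : ℕ} {G : GraphPair Ω n m} {P : Measure Ω}
  {π : Equiv.Perm (Fin n)} {qu ρu qa ρa : ℝ}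

namespace GraphPair.IsAttrER

variable (hmodel : G.IsAttrER P π qu ρu qa ρa)
include hmodel

lemma measureReal_exists_NuJ_univ_ge_le (hn : 0 < n) (hq : 0 ≤ qu) {γ : ℝ} (hγ : 1 ≤ γ)
    (hf : klFun γ * (((n : ℝ) - 2) * qu ^ 2) = 3 * Real.log n) :
    P.real {ω | ∃ i j, j ≠ π i ∧ γ * ((n : ℝ) - 2) * qu ^ 2 ≤ NuJ G ω univ π i j} ≤
      (n : ℝ)⁻¹ := by
  have := hmodel.1
  set A : Fin n × Fin n → Set Ω := fun x =>
    {ω | x.2 ≠ π x.1 ∧ γ * ((n : ℝ) - 2) * qu ^ 2 ≤ NuJ G ω univ π x.1 x.2}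
  have hA : ∀ x, P.real (A x) ≤ ((n : ℝ) ^ 3)⁻¹ := fun x => by
    rw [← Real.exp_log (by positivity : (0 : ℝ) < n ^ 3), ← Real.exp_neg, Real.log_pow,
      Nat.cast_ofNat, ← hf, mul_comm]
    by_cases hx : x.2 = π x.1
    · simp only [A, hx, ne_eq, not_true_eq_false, false_and, Set.ofPred_false,
        measureReal_empty]
      positivity
    · exact (measureReal_mono fun ω hω => hω.2).trans
        (hmodel.measureReal_NuJ_univ_ge_le hq hγ hx)
  calc _ ≤ P.real (⋃ x ∈ (univ : Finset (Fin n × Fin n)), A x) := by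
        refine measureReal_mono ?_ (measure_ne_top _ _)
        rintro ω ⟨i, j, h⟩
        exact Set.mem_biUnion (x := (i, j)) (Finset.mem_univ _) h
    _ ≤ ∑ x : Fin n × Fin n, P.real (A x) := measureReal_biUnion_finset_le _ _
    _ ≤ ∑ _x : Fin n × Fin n, ((n : ℝ) ^ 3)⁻¹ := Finset.sum_le_sum fun x _ => hA x
    _ = (n : ℝ)⁻¹ := by
        simp only [Finset.sum_const, Finset.card_univ, Fintype.card_prod, Fintype.card_fin,
          nsmul_eq_mul, Nat.cast_mul]
        field_simp

lemma measureReal_sum_NuJ_compl_le_pow {S : Finset (Fin n)} {δ M ℓ thr : ℝ} (hδ0 : 0 < δ)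
    (hδ1 : δ ≤ 1)
    (ha : 0 ≤ qu ^ 2 + ρu * qu * (1 - qu)) (hM : M ≤ #Sᶜ)
    (hℓ : ℓ ≤ thr * Real.log δ + M * (qu ^ 2 + ρu * qu * (1 - qu)) * (1 - δ)) :
    P.real {ω | ((∑ i ∈ S, NuJ G ω Sᶜ π i (π i) : ℕ) : ℝ) ≤ #S * thr} ≤
      Real.exp (-ℓ) ^ #S := by
  refine (hmodel.measureReal_sum_NuJ_compl_le S hδ0 hδ1 _).trans ?_
  rw [← Real.exp_nat_mul, Real.exp_le_exp]
  have := mul_le_mul_of_nonneg_right hM (mul_nonneg ha (by linarith : 0 ≤ 1 - δ))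
  nlinarith [(Nat.cast_nonneg _ : (0 : ℝ) ≤ #S)]

lemma measureReal_exists_stuck_le {δ M ℓ thr : ℝ} (hδ0 : 0 < δ) (hδ1 : δ ≤ 1)
    (ha : 0 ≤ qu ^ 2 + ρu * qu * (1 - qu))
    (hℓ : ℓ ≤ thr * Real.log δ + M * (qu ^ 2 + ρu * qu * (1 - qu)) * (1 - δ))
    (hsmall : n * Real.exp (-ℓ) ≤ 1) :
    P.real {ω | ∃ S : Finset (Fin n), S.Nonempty ∧ M ≤ #Sᶜ ∧
      ((∑ i ∈ S, NuJ G ω Sᶜ π i (π i) : ℕ) : ℝ) ≤ #S * thr} ≤ 2 * (n * Real.exp (-ℓ)) := by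
  have := hmodel.1
  calc _ ≤ P.real (⋃ S ∈ (univ : Finset (Finset (Fin n))).filter (fun S => S.Nonempty ∧ M ≤ #Sᶜ),
        {ω | ((∑ i ∈ S, NuJ G ω Sᶜ π i (π i) : ℕ) : ℝ) ≤ #S * thr}) := by
        refine measureReal_mono (fun ω ⟨S, hS, hM, h⟩ => ?_) (measure_ne_top _ _)
        exact Set.mem_biUnion (Finset.mem_filter.mpr ⟨Finset.mem_univ S, hS, hM⟩) h
    _ ≤ ∑ S ∈ (univ : Finset (Finset (Fin n))).filter (fun S => S.Nonempty ∧ M ≤ #Sᶜ),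
        Real.exp (-ℓ) ^ #S :=
      (measureReal_biUnion_finset_le _ _).trans (Finset.sum_le_sum fun S hS =>
        hmodel.measureReal_sum_NuJ_compl_le_pow hδ0 hδ1 ha (Finset.mem_filter.mp hS).2.2 hℓ)
    _ ≤ ∑ S ∈ (univ : Finset (Finset (Fin n))).filter Finset.Nonempty, Real.exp (-ℓ) ^ #S :=
      Finset.sum_le_sum_of_subset_of_nonneg (fun S hS => by
        simp only [Finset.mem_filter] at hS ⊢
        exact ⟨hS.1, hS.2.1⟩) fun _ _ _ => by positivity
    _ ≤ _ := sum_pow_card_nonempty_le (Real.exp_pos _).le hsmall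

end GraphPair.IsAttrER

end BadEvents

lemma natCast_mul_exp_neg_one_add_mul_log {n : ℕ} {c : ℝ} (hn : (0 : ℝ) < n) :
    n * Real.exp (-((1 + c) * Real.log n)) = Real.exp (-(c * Real.log n)) := by
  nth_rewrite 1 [← Real.exp_log hn]
  rw [← Real.exp_add]
  ring_nf

lemma one_sub_add_le_measureReal_of_compl_union_subset {Ω : Type*} [MeasurableSpace Ω]
    {P : Measure Ω} [IsProbabilityMeasure P] {W B A : Set Ω} {a b : ℝ} (hW : P.real W ≤ a)
    (hB : P.real B ≤ b) (h : (W ∪ B)ᶜ ⊆ A) : 1 - (a + b) ≤ P.real A := by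
  have hcompl := measureReal_union_le (μ := P) (W ∪ B) (W ∪ B)ᶜ
  rw [Set.union_compl_self, probReal_univ] at hcompl
  linarith [measureReal_union_le (μ := P) W B, measureReal_mono (μ := P) h]

section PerN

open scoped Classical

variable {Ω : Type*} [MeasurableSpace Ω] {n m : ℕ} {G : GraphPair Ω n m} {P : Measure Ω}
  {π : Equiv.Perm (Fin n)} {qu ρu qa ρa ε : ℝ}

theorem GraphPair.IsAttrER.measureReal_refinement_correct_ge
    (hmodel : G.IsAttrER P π qu ρu qa ρa) (hε : 0 < ε) (hε2 : ε ≤ 2) (hn : 4 ≤ n)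
    (hK : max (16 * denseConst ε) (8 * denseConst ε * ratioConst ε ^ 2) * Real.log n ≤
      n * ρu ^ 2)
    (h2 : (1 + ε) * Real.log n ≤ n * qu * (qu + ρu * (1 - qu))) (h3 : ε ≤ ρu * (1 - qu) / qu)
    {γ : ℝ} (hγ : 1 < γ)
    (hγeq : γ * Real.log γ - γ + 1 = 3 * Real.log n / (((n : ℝ) - 2) * qu ^ 2))
    (I : Ω → Finset (Fin n)) (ph : Ω → Fin n → Fin n)
    (hI : ∀ ω, (∀ u ∈ I ω, ph ω u = π u) ∧ (1 - ε / 16) * (n : ℝ) ≤ #(I ω)) :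
    1 - ((n : ℝ)⁻¹ + 2 * Real.exp (-(ε / 4 * Real.log n))) ≤ P.real {ω |
      ∀ st : Finset (Fin n) × (Fin n → Fin n),
        Relation.ReflTransGen (StepSparse G ω (γ * ((n : ℝ) - 2) * qu ^ 2)) (I ω, ph ω) st →
        (∀ st', ¬ StepSparse G ω (γ * ((n : ℝ) - 2) * qu ^ 2) st st') →
        st.1 = univ ∧ st.2 = π} := by
  have := hmodel.1
  have hn4 : (4 : ℝ) ≤ n := by exact_mod_cast hn
  have hL : 0 ≤ Real.log n := Real.log_nonneg (by linarith)
  obtain ⟨hq0, hq1, hρ0, hρ1⟩ := (hmodel.2.1 s(⟨0, by omega⟩, ⟨1, by omega⟩)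
    (by simp [Fin.ext_iff])).param_range (hε.trans_le h3)
  have hb : 0 < ((n : ℝ) - 2) * qu ^ 2 := mul_pos (by linarith) (by positivity)
  have hf : klFun γ * (((n : ℝ) - 2) * qu ^ 2) = 3 * Real.log n := by
    rw [klFun_apply, show γ * Real.log γ + 1 - γ = γ * Real.log γ - γ + 1 by ring, hγeq,
      div_mul_cancel₀ _ hb.ne']
  obtain ⟨δ, hδ0, hδ1, hδ⟩ :=
    exists_stuck_exponent_of_params hε hε2 hn4 hL hq0 hρ0 hρ1 hK h2 h3 hγ hf
  have hn_exp := natCast_mul_exp_neg_one_add_mul_log (c := ε / 4) (by linarith : (0 : ℝ) < n)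
  have hW := hmodel.measureReal_exists_NuJ_univ_ge_le (by omega) hq0.le hγ.le hf
  have hB := hmodel.measureReal_exists_stuck_le hδ0 hδ1
    (add_nonneg (sq_nonneg _) (mul_pos (mul_pos hρ0 hq0) (sub_pos.mpr hq1)).le) hδ
    (hn_exp ▸ Real.exp_le_one_iff.mpr (neg_nonpos.mpr (by positivity)))
  rw [hn_exp] at hB
  refine one_sub_add_le_measureReal_of_compl_union_subset hW hB fun ω hω st hrun hterm => ?_
  simp only [Set.mem_compl_iff, Set.mem_union, Set.mem_ofPred_eq, not_or, not_exists,
    not_and, not_le] at hω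
  exact StepSparse.correct_of_terminal (hI ω).1 (hI ω).2 (fun i j hj => hω.1 i j hj)
    (fun S hS hM => hω.2 S hS hM) hrun hterm

end PerN

lemma tendsto_measure_one_of_eventually_le {ι : Type*} {l : Filter ι} {Ω : ι → Type*}
    [∀ i, MeasurableSpace (Ω i)] {P : ∀ i, Measure (Ω i)} [∀ i, IsProbabilityMeasure (P i)]
    {A : ∀ i, Set (Ω i)} {f : ι → ℝ} (hf : Tendsto f l (nhds 1))
    (hle : ∀ᶠ i in l, f i ≤ (P i).real (A i)) : Tendsto (fun i => P i (A i)) l (nhds 1) := by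
  have hreal : Tendsto (fun i => (P i).real (A i)) l (nhds 1) :=
    tendsto_of_tendsto_of_tendsto_of_le_of_le' hf tendsto_const_nhds hle
      (Eventually.of_forall fun _ => measureReal_le_one)
  have := ENNReal.tendsto_ofReal hreal
  rw [ENNReal.ofReal_one] at this
  exact this.congr fun i => ENNReal.ofReal_toReal (measure_ne_top _ _)

lemma tendsto_one_sub_inv_add_exp {ε : ℝ} (hε : 0 < ε) :
    Tendsto (fun n : ℕ => 1 - ((n : ℝ)⁻¹ + 2 * Real.exp (-(ε / 4 * Real.log n)))) atTop
      (nhds 1) := by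
  have hinv : Tendsto (fun n : ℕ => (n : ℝ)⁻¹) atTop (nhds 0) :=
    tendsto_inv_atTop_zero.comp tendsto_natCast_atTop_atTop
  have hexp : Tendsto (fun n : ℕ => Real.exp (-(ε / 4 * Real.log n))) atTop (nhds 0) :=
    Real.tendsto_exp_atBot.comp (tendsto_neg_atTop_atBot.comp
      ((Real.tendsto_log_atTop.comp tendsto_natCast_atTop_atTop).const_mul_atTop (by positivity)))
  simpa using tendsto_const_nhds.sub (hinv.add (hexp.const_mul 2))

/-- **Correctness of the greedy refinement in the attribute-sparse regime
(Proposition 4).** Under `n·ρ_u² = ω(log n)`, `n·q_u·(q_u+ρ_u(1-q_u)) ≥ (1+ε)·log n` and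
`ρ_u(1-q_u)/q_u ≥ ε`, if `π̂ : I → [n]` agrees with `π*` on `I` and
`|I| ≥ (1-ε/16)·n`, then with high probability every run of the greedy refinement with
threshold `γ₁·(n-2)·q_u²` (where `γ₁ > 1` solves `f(γ₁) = 3 log n/((n-2)q_u²)`) ends in
a terminal state with `J = [n]` and `π̃ = π*`. -/
theorem refinement_sparse_correct (ε : ℝ) (hε : 0 < ε)
    (Ω : ℕ → Type*) [∀ n, MeasurableSpace (Ω n)] (P : ∀ n, Measure (Ω n))
    (m : ℕ → ℕ) (qu ρu qa ρa : ℕ → ℝ)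
    (G : ∀ n, GraphPair (Ω n) n (m n)) (πs : ∀ n, Equiv.Perm (Fin n))
    (hmodel : ∀ n, (G n).IsAttrER (P n) (πs n) (qu n) (ρu n) (qa n) (ρa n))
    (h1 : Tendsto (fun n : ℕ => (n : ℝ) * ρu n ^ 2 / Real.log n) atTop atTop)
    (h2 : ∀ n : ℕ, (1 + ε) * Real.log n ≤ (n : ℝ) * qu n * (qu n + ρu n * (1 - qu n)))
    (h3 : ∀ n, ε ≤ ρu n * (1 - qu n) / qu n)
    (γ1 : ℕ → ℝ)
    (hγ : ∀ n : ℕ, 3 ≤ n → 1 < γ1 n ∧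
      γ1 n * Real.log (γ1 n) - γ1 n + 1 = 3 * Real.log n / (((n : ℝ) - 2) * qu n ^ 2))
    (I : ∀ n, Ω n → Finset (Fin n)) (πhat : ∀ n, Ω n → Fin n → Fin n)
    (hI : ∀ n ω, (∀ u ∈ I n ω, πhat n ω u = πs n u) ∧
      (1 - ε / 16) * (n : ℝ) ≤ ((I n ω).card : ℝ)) :
    Tendsto (fun n => P n {ω |
      ∀ st : Finset (Fin n) × (Fin n → Fin n),
        Relation.ReflTransGen (StepSparse (G n) ω (γ1 n * ((n : ℝ) - 2) * qu n ^ 2))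
          (I n ω, πhat n ω) st →
        (∀ st', ¬ StepSparse (G n) ω (γ1 n * ((n : ℝ) - 2) * qu n ^ 2) st st') →
        st.1 = Finset.univ ∧ st.2 = ⇑(πs n)})
      atTop (nhds (1 : ENNReal)) := by
  have hprob : ∀ n, IsProbabilityMeasure (P n) := fun n => (hmodel n).1
  have hε2 : ε ≤ 2 := by
    -- at `n = 2`, `h2` bounds `(1 + ε) log 2` by twice a probability
    have ha := ((hmodel 2).2.1 s(0, 1) (by decide)).both_le_one
    have h22 := h2 2
    push_cast at h22
    nlinarith [Real.log_two_gt_d9]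
  set K := max (16 * denseConst ε) (8 * denseConst ε * ratioConst ε ^ 2)
  have hlog : Tendsto (fun n : ℕ => Real.log n) atTop atTop :=
    Real.tendsto_log_atTop.comp tendsto_natCast_atTop_atTop
  refine tendsto_measure_one_of_eventually_le (tendsto_one_sub_inv_add_exp hε) ?_
  filter_upwards [eventually_ge_atTop 4, h1.eventually_ge_atTop K, hlog.eventually_gt_atTop 0]
    with n hn hK hlogn
  obtain ⟨hγ1, hγeq⟩ := hγ n (by omega)
  rw [le_div_iff₀ hlogn] at hK
  exact (hmodel n).measureReal_refinement_correct_ge hε hε2 hn hK (h2 n) (h3 n) hγ1 hγeq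
    (I n) (πhat n) (hI n)
end

section
/- Rigidity of quadruples with disjoint attribute sets (Lemma 2). Let i∈[n] be a user, let A and B be disjoint sets of k attributes, and let S_1,S_2∈G_{i,A} and T_1,T_2∈G_{i,B}. If every edge of the union graph S_1∪S_2∪T_1∪T_2 belongs to at least two of the four trees S_1,S_2,T_1,T_2, then S_1=S_2 and T_1=T_2. -/
open Finset

/-- Every edge of the union graph `S₁ ∪ S₂ ∪ T₁ ∪ T₂` (where `S₁,T₁` are rooted at `i₁`
and `S₂,T₂` at `i₂`, with encodings `f₁,f₂,g₁,g₂`) belongs to at least two of the four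
trees. -/
def CoveredTwice {n m : ℕ} (i1 i2 : Fin n) (f1 f2 g1 g2 : Fin m → Fin n) : Prop :=
  (∀ e ∈ userEdges i1 f1 ∪ userEdges i2 f2 ∪ userEdges i1 g1 ∪ userEdges i2 g2,
    2 ≤ (if e ∈ userEdges i1 f1 then 1 else 0) + (if e ∈ userEdges i2 f2 then 1 else 0)
      + (if e ∈ userEdges i1 g1 then 1 else 0) + (if e ∈ userEdges i2 g2 then 1 else 0)) ∧
  (∀ p ∈ attrEdges i1 f1 ∪ attrEdges i2 f2 ∪ attrEdges i1 g1 ∪ attrEdges i2 g2,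
    2 ≤ (if p ∈ attrEdges i1 f1 then 1 else 0) + (if p ∈ attrEdges i2 f2 then 1 else 0)
      + (if p ∈ attrEdges i1 g1 then 1 else 0) + (if p ∈ attrEdges i2 g2 then 1 else 0))


lemma mem_attrEdges_self {n m : ℕ} (i : Fin n) (f : Fin m → Fin n) (a : Fin m)
    (ha : f a ≠ i) : (f a, a) ∈ attrEdges i f := by
  apply Finset.mem_image_of_mem
  simp [treeSupp, ha]

lemma not_mem_attrEdges {n m : ℕ} (i : Fin n) (g : Fin m → Fin n) (a : Fin m) (x : Fin n)
    (ha : a ∉ treeSupp i g) : (x, a) ∉ attrEdges i g := by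
  intro h
  simp only [attrEdges, Finset.mem_image] at h
  obtain ⟨b, hb, hba⟩ := h
  have h2 := congrArg Prod.snd hba
  simp at h2
  subst h2
  exact ha hb

lemma attrEdges_eq {n m : ℕ} {i : Fin n} {f g : Fin m → Fin n} (a : Fin m)
    (h : (f a, a) ∈ attrEdges i g) : g a = f a := by
  simp only [attrEdges, Finset.mem_image] at h
  obtain ⟨b, hb, hba⟩ := h
  have h2 := congrArg Prod.snd hba
  simp at h2
  subst h2
  exact congrArg Prod.fst hba

/-- **Rigidity of quadruples with disjoint attribute sets (Lemma 2).** -/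
theorem rigidity_disjoint_attrs {n m : ℕ} (k : ℕ) (hk : 3 ≤ k) (i : Fin n)
    (A B : Finset (Fin m)) (hA : A.card = k) (hB : B.card = k) (hAB : Disjoint A B)
    (f1 f2 g1 g2 : Fin m → Fin n)
    (hf1 : IsPort i A f1) (hf2 : IsPort i A f2)
    (hg1 : IsPort i B g1) (hg2 : IsPort i B g2)
    (hcov : CoveredTwice i i f1 f2 g1 g2) :
    f1 = f2 ∧ g1 = g2 := by
  have key : ∀ (A B : Finset (Fin m)) (f1 f2 g1 g2 : Fin m → Fin n),
      IsPort i A f1 → IsPort i A f2 → IsPort i B g1 → IsPort i B g2 → Disjoint A B →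
      (∀ p ∈ attrEdges i f1 ∪ attrEdges i f2 ∪ attrEdges i g1 ∪ attrEdges i g2,
        2 ≤ (if p ∈ attrEdges i f1 then 1 else 0) + (if p ∈ attrEdges i f2 then 1 else 0)
          + (if p ∈ attrEdges i g1 then 1 else 0) + (if p ∈ attrEdges i g2 then 1 else 0)) →
      f1 = f2 := by
    intro A B f1 f2 g1 g2 hf1 hf2 hg1 hg2 hAB hcov
    funext a
    by_cases ha : f1 a = i
    · have ha1 : a ∉ A := by
        rw [← hf1.1]; simp [treeSupp, ha]
      have : a ∉ treeSupp i f2 := hf2.1 ▸ ha1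
      simp only [treeSupp, Finset.mem_filter, Finset.mem_univ, true_and, not_not] at this
      rw [ha, this]
    · have haA : a ∈ A := by rw [← hf1.1]; simp [treeSupp, ha]
      have hmem : (f1 a, a) ∈ attrEdges i f1 := mem_attrEdges_self i f1 a ha
      have hg1' : (f1 a, a) ∉ attrEdges i g1 := by
        apply not_mem_attrEdges
        rw [hg1.1]
        exact Finset.disjoint_left.mp hAB haA
      have hg2' : (f1 a, a) ∉ attrEdges i g2 := by
        apply not_mem_attrEdges
        rw [hg2.1]
        exact Finset.disjoint_left.mp hAB haA
      have h := hcov (f1 a, a) (by simp [Finset.mem_union, hmem])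
      simp only [hmem, hg1', hg2', if_true, if_false] at h
      by_cases h2 : (f1 a, a) ∈ attrEdges i f2
      · exact (attrEdges_eq a h2).symm
      · simp [h2] at h
  refine ⟨key A B f1 f2 g1 g2 hf1 hf2 hg1 hg2 hAB hcov.2, ?_⟩
  refine key B A g1 g2 f1 f2 hg1 hg2 hf1 hf2 hAB.symm ?_
  intro p hp
  have h := hcov.2 p (by
    simp only [Finset.mem_union] at hp ⊢
    tauto)
  omega
end

section
/- Equality of user-edge sets for quadruples rooted at distinct users (Lemma 4). Let i,j∈[n] be distinct users, let A and B be sets of k attributes, and let S_1∈G_{i,A}, S_2∈G_{j,A}, T_1∈G_{i,B}, T_2∈G_{j,B}. If every edge of the union graph S_1∪S_2∪T_1∪T_2 belongs to at least two of the four trees, then the set of user–user edges of S_1 equals the set of user–user edges of T_1, and the set of user–user edges of S_2 equals the set of user–user edges of T_2. -/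
open Finset

lemma mem_userEdges_iff {n m : ℕ} {i : Fin n} {f : Fin m → Fin n} {e : Sym2 (Fin n)} :
    e ∈ userEdges i f ↔ ∃ a, f a ≠ i ∧ e = s(i, f a) := by
  simp [userEdges, treeSupp, eq_comm]

lemma cross_eq {n m : ℕ} {i j : Fin n} (hij : i ≠ j) {f p : Fin m → Fin n}
    {e : Sym2 (Fin n)} (he : e ∈ userEdges i f) (he' : e ∈ userEdges j p) :
    e = s(i, j) := by
  rw [mem_userEdges_iff] at he he'
  obtain ⟨a, ha, rfl⟩ := he
  obtain ⟨b, hb, hab⟩ := he'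
  rw [Sym2.eq_iff] at hab ⊢
  rcases hab with ⟨h1, h2⟩ | ⟨h1, h2⟩
  · exact absurd h1 hij
  · exact Or.inl ⟨rfl, h2⟩

lemma card_userEdges_s11 {n m : ℕ} {i : Fin n} {A : Finset (Fin m)} {f : Fin m → Fin n}
    (hf : IsPort i A f) : (userEdges i f).card = A.card := by
  rw [userEdges, Finset.card_image_of_injOn, hf.1]
  intro a ha b hb hab
  have ha' : f a ≠ i := by simpa [treeSupp] using ha
  have : f a = f b := by
    rw [Sym2.eq_iff] at hab
    rcases hab with ⟨_, h⟩ | ⟨h, h'⟩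
    · exact h
    · exact absurd h' ha'
  exact hf.2 ha hb this

lemma finset_eq_of_almost {α : Type*} [DecidableEq α] {S T : Finset α} {x : α}
    (hcard : S.card = T.card)
    (hST : ∀ e ∈ S, e ≠ x → e ∈ T) (hTS : ∀ e ∈ T, e ≠ x → e ∈ S) : S = T := by
  by_cases hxS : x ∈ S
  · by_cases hxT : x ∈ T
    · apply Finset.eq_of_subset_of_card_le _ hcard.ge
      intro e he
      by_cases hex : e = x
      · exact hex ▸ hxT
      · exact hST e he hex
    · have hsub : T ⊆ S := by
        intro e he
        refine hTS e he ?_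
        rintro rfl; exact hxT he
      have := Finset.eq_of_subset_of_card_le hsub hcard.le
      exact absurd (this ▸ hxS) hxT
  · by_cases hxT : x ∈ T
    · have hsub : S ⊆ T := by
        intro e he
        refine hST e he ?_
        rintro rfl; exact hxS he
      have := Finset.eq_of_subset_of_card_le hsub hcard.ge
      exact absurd (this ▸ hxT) hxS
    · apply Finset.eq_of_subset_of_card_le _ hcard.ge
      intro e he
      refine hST e he ?_
      rintro rfl; exact hxS he

lemma covered_alt {n m : ℕ} {i j : Fin n} {f p g q : Fin m → Fin n}
    (hcov : ∀ e ∈ userEdges i f ∪ userEdges j p ∪ userEdges i g ∪ userEdges j q,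
      2 ≤ (if e ∈ userEdges i f then 1 else 0) + (if e ∈ userEdges j p then 1 else 0)
        + (if e ∈ userEdges i g then 1 else 0) + (if e ∈ userEdges j q then 1 else 0))
    {e : Sym2 (Fin n)} (he : e ∈ userEdges i f) :
    e ∈ userEdges j p ∨ e ∈ userEdges i g ∨ e ∈ userEdges j q := by
  have := hcov e (by simp [he])
  by_cases h1 : e ∈ userEdges j p
  · exact Or.inl h1
  by_cases h2 : e ∈ userEdges i g
  · exact Or.inr (Or.inl h2)
  by_cases h3 : e ∈ userEdges j q
  · exact Or.inr (Or.inr h3)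
  simp [he, h1, h2, h3] at this

lemma userEdges_eq_half {n m : ℕ} {i j : Fin n} (hij : i ≠ j) {A B : Finset (Fin m)}
    (hAB : A.card = B.card) {f p g q : Fin m → Fin n}
    (hf : IsPort i A f) (hg : IsPort i B g)
    (hcov : ∀ e ∈ userEdges i f ∪ userEdges j p ∪ userEdges i g ∪ userEdges j q,
      2 ≤ (if e ∈ userEdges i f then 1 else 0) + (if e ∈ userEdges j p then 1 else 0)
        + (if e ∈ userEdges i g then 1 else 0) + (if e ∈ userEdges j q then 1 else 0)) :
    userEdges i f = userEdges i g := by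
  have hcard : (userEdges i f).card = (userEdges i g).card := by
    rw [card_userEdges_s11 hf, card_userEdges_s11 hg, hAB]
  refine finset_eq_of_almost (x := s(i, j)) hcard ?_ ?_
  · intro e he hex
    rcases covered_alt hcov he with h | h | h
    · exact absurd (cross_eq hij he h) hex
    · exact h
    · exact absurd (cross_eq hij he h) hex
  · intro e he hex
    have hcov' : ∀ e ∈ userEdges i g ∪ userEdges j q ∪ userEdges i f ∪ userEdges j p,
        2 ≤ (if e ∈ userEdges i g then 1 else 0) + (if e ∈ userEdges j q then 1 else 0)
          + (if e ∈ userEdges i f then 1 else 0) + (if e ∈ userEdges j p then 1 else 0) := by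
      intro e he'
      have he'' : e ∈ userEdges i f ∪ userEdges j p ∪ userEdges i g ∪ userEdges j q := by
        simp only [Finset.mem_union] at he' ⊢; tauto
      have := hcov e he''
      omega
    rcases covered_alt hcov' he with h | h | h
    · exact absurd (cross_eq hij he h) hex
    · exact h
    · exact absurd (cross_eq hij he h) hex

/-- **Equality of user-edge sets for quadruples rooted at distinct users (Lemma 4).**
If `i ≠ j`, `S₁ ∈ G_{i,A}`, `S₂ ∈ G_{j,A}`, `T₁ ∈ G_{i,B}`, `T₂ ∈ G_{j,B}` and every
edge of the union graph belongs to at least two of the four trees, then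
`E^u(S₁) = E^u(T₁)` and `E^u(S₂) = E^u(T₂)`. -/
theorem userEdges_eq_of_covered {n m : ℕ} (k : ℕ) (hk : 3 ≤ k) (i j : Fin n)
    (hij : i ≠ j) (A B : Finset (Fin m)) (hA : A.card = k) (hB : B.card = k)
    (f1 f2 g1 g2 : Fin m → Fin n)
    (hf1 : IsPort i A f1) (hf2 : IsPort j A f2)
    (hg1 : IsPort i B g1) (hg2 : IsPort j B g2)
    (hcov : CoveredTwice i j f1 f2 g1 g2) :
    userEdges i f1 = userEdges i g1 ∧ userEdges j f2 = userEdges j g2 := by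
  have hAB : A.card = B.card := by rw [hA, hB]
  constructor
  · exact userEdges_eq_half hij hAB hf1 hg1 hcov.1
  · refine userEdges_eq_half (p := f1) (q := g1) hij.symm hAB hf2 hg2 ?_
    intro e he
    have he' : e ∈ userEdges i f1 ∪ userEdges j f2 ∪ userEdges i g1 ∪ userEdges j g2 := by
      simp only [Finset.mem_union] at he ⊢; tauto
    have := hcov.1 e he'
    omega
end
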